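/- arXiv:2005.12229 — 8 statements merged into one kernel-verified Lean document; each statement's English description precedes it below -/
import Mathlib

section
/- Let s = (s_n) be a directive sequence of non-erasing substitutions on the finite alphabet A = {0,…,d} which is primitive, i.e. for every k there exists n ≥ k such that for every letter a the word s_k∘s_{k+1}∘⋯∘s_{n−1}(a) contains every letter of A. Let Ω_s be the set of infinite words w : ℕ → A all of whose finite factors belong to the language L of all factors of the finite words s_0∘⋯∘s_{n−1}(a), n ∈ ℕ, a ∈ A. Then for all w, w′ ∈ Ω_s, every finite prefix of w is a factor of w′ (in particular the subshift Ω_s is minimal). -/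
/-!
A prefix `p` of `w ∈ Ω_s` lies in some `s_{[0,n)}(a)`, and by primitivity there is `N ≥ n` such
that every `N`-block `s_{[0,N)}(b)` contains `s_{[0,n)}(a)`, hence `p`. Let `K` bound the lengths
of the `N`-blocks. The prefix of `w' ∈ Ω_s` of length `2K + 1` lies in some `s_{[0,M)}(c)`, and
using primitivity and non-erasure once more we may take `M ≥ N`. Then `s_{[0,M)}(c)` is a
concatenation of `N`-blocks, each of length at most `K`, so a factor of it of length `2K + 1`
contains a whole `N`-block, hence `p`.
-/

/-- Apply a substitution to a finite word by concatenating the images of its letters. -/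
def subApply {d : ℕ} (σ : Fin (d + 1) → List (Fin (d + 1)))
    (w : List (Fin (d + 1))) : List (Fin (d + 1)) :=
  w.flatMap σ

/-- `applySeq s k n w = s_k (s_{k+1} (⋯ (s_{n-1} w)))`, the composition
`s_k ∘ s_{k+1} ∘ ⋯ ∘ s_{n-1}` applied to the word `w`. -/
def applySeq {d : ℕ} (s : ℕ → Fin (d + 1) → List (Fin (d + 1))) (k n : ℕ)
    (w : List (Fin (d + 1))) : List (Fin (d + 1)) :=
  (List.range' k (n - k)).foldr (fun i acc => subApply (s i) acc) w

/-- `l` is a factor (contiguous finite subword) of the infinite word `w`. -/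
def IsFactorOf {d : ℕ} (l : List (Fin (d + 1))) (w : ℕ → Fin (d + 1)) : Prop :=
  ∃ i : ℕ, l = (List.range l.length).map (fun j => w (i + j))

theorem List.exists_mem_infix_of_infix_flatMap {α β : Type*} {g : β → List α} {K : ℕ}
    (hK : ∀ b, (g b).length ≤ K) {u : List α} (hu : 2 * K < u.length) :
    ∀ {v : List β}, u <:+: v.flatMap g → ∃ b ∈ v, g b <:+: u
  | [], h => by
    rw [flatMap_nil, infix_nil] at h
    simp [h] at hu
  | b :: v, h => by
    rw [flatMap_cons, infix_append_iff] at h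
    rcases h with h | h | ⟨p, q, rfl, hp, hq⟩
    · have := h.length_le
      have := hK b
      omega
    · obtain ⟨b', hb', h'⟩ := exists_mem_infix_of_infix_flatMap hK hu h
      exact ⟨b', mem_cons_of_mem _ hb', h'⟩
    · have hpK : p.length ≤ K := hp.length_le.trans (hK b)
      rw [length_append] at hu
      cases v with
      | nil =>
        rw [flatMap_nil, prefix_nil] at hq
        simp only [hq, length_nil] at hu
        omega
      | cons b' v =>
        rw [flatMap_cons] at hq
        have hb'q : g b' <+: q :=
          prefix_of_prefix_length_le (prefix_append _ _) hq (by have := hK b'; omega)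
        exact ⟨b', mem_cons_of_mem _ mem_cons_self, hb'q.isInfix.trans infix_append_right⟩

section SAdic

variable {d : ℕ}

theorem isFactorOf_iff {l : List (Fin (d + 1))} {w : ℕ → Fin (d + 1)} :
    IsFactorOf l w ↔ ∃ i, ∀ j (hj : j < l.length), l[j] = w (i + j) := by
  refine exists_congr fun i => ⟨fun h j hj => ?_, fun h => List.ext_getElem (by simp) ?_⟩
  · rw [List.getElem_of_eq h hj]
    simp
  · intro j hj _
    simp [h j hj]

theorem isFactorOf_range_map (w : ℕ → Fin (d + 1)) (m : ℕ) :
    IsFactorOf ((List.range m).map w) w :=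
  ⟨0, by simp⟩

theorem IsFactorOf.of_infix {l u : List (Fin (d + 1))} {w : ℕ → Fin (d + 1)}
    (hu : IsFactorOf u w) (h : l <:+: u) : IsFactorOf l w := by
  obtain ⟨i, hi⟩ := isFactorOf_iff.mp hu
  obtain ⟨k, hk, hl⟩ := List.infix_iff_getElem?.mp h
  refine isFactorOf_iff.mpr ⟨i + k, fun j hj => ?_⟩
  have := hl j hj
  rw [List.getElem?_eq_getElem (by omega), Option.some_inj, hi] at this
  rw [← this, Nat.add_comm j k, Nat.add_assoc]

variable {s : ℕ → Fin (d + 1) → List (Fin (d + 1))}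

theorem applySeq_eq_flatMap (k n : ℕ) (w : List (Fin (d + 1))) :
    applySeq s k n w = w.flatMap fun a => applySeq s k n [a] := by
  unfold applySeq
  induction List.range' k (n - k) with
  | nil => simp
  | cons i L ih =>
    rw [List.foldr_cons, ih]
    simp only [subApply, List.flatMap_assoc, List.foldr_cons]

theorem applySeq_trans {k n m : ℕ} (hkn : k ≤ n) (hnm : n ≤ m) (w : List (Fin (d + 1))) :
    applySeq s k m w = applySeq s k n (applySeq s n m w) := by
  unfold applySeq
  rw [show m - k = (n - k) + (m - n) by omega, ← List.range'_append_1, List.foldr_append,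
    show k + (n - k) = n by omega]

theorem applySeq_ne_nil (hne : ∀ n a, s n a ≠ []) (k n : ℕ) {w : List (Fin (d + 1))}
    (hw : w ≠ []) : applySeq s k n w ≠ [] := by
  unfold applySeq
  induction List.range' k (n - k) with
  | nil => exact hw
  | cons i L ih =>
    obtain ⟨a, ha⟩ := List.exists_mem_of_ne_nil _ ih
    simp only [List.foldr_cons, subApply, ne_eq, List.flatMap_eq_nil_iff, not_forall]
    exact ⟨a, ha, hne i a⟩

theorem mem_applySeq_of_le (hne : ∀ n a, s n a ≠ []) {k n N : ℕ} (hkn : k ≤ n) (hnN : n ≤ N)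
    (h : ∀ a b : Fin (d + 1), b ∈ applySeq s k n [a]) (a b : Fin (d + 1)) :
    b ∈ applySeq s k N [a] := by
  obtain ⟨x, hx⟩ := List.exists_mem_of_ne_nil _ (applySeq_ne_nil hne n N (List.cons_ne_nil a []))
  rw [applySeq_trans hkn hnN, applySeq_eq_flatMap, List.mem_flatMap]
  exact ⟨x, hx, h x b⟩

theorem applySeq_infix_of_forall_mem {M N : ℕ} (hMN : M ≤ N)
    (h : ∀ a b : Fin (d + 1), b ∈ applySeq s M N [a]) (c b : Fin (d + 1)) :
    applySeq s 0 M [c] <:+: applySeq s 0 N [b] := by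
  rw [applySeq_trans M.zero_le hMN, applySeq_eq_flatMap 0 M (applySeq s M N [b])]
  exact List.infix_flatMap_of_mem (h b c) fun a => applySeq s 0 M [a]

end SAdic

theorem prefix_isFactor_of_mem_primitive_Sadic_subshift_general {d : ℕ}
    (s : ℕ → Fin (d + 1) → List (Fin (d + 1)))
    (hne : ∀ n a, s n a ≠ [])
    (hprim : ∀ k : ℕ, ∃ n : ℕ, k ≤ n ∧ ∀ a b : Fin (d + 1), b ∈ applySeq s k n [a])
    (Ω : Set (ℕ → Fin (d + 1)))
    (hΩ : Ω = {w | ∀ l : List (Fin (d + 1)), IsFactorOf l w →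
      ∃ n : ℕ, ∃ a : Fin (d + 1), l <:+: applySeq s 0 n [a]}) :
    ∀ w ∈ Ω, ∀ w' ∈ Ω, ∀ m : ℕ,
      IsFactorOf ((List.range m).map w) w' := by
  subst hΩ
  intro w hw w' hw' m
  obtain ⟨n, a, hpa⟩ := hw _ (isFactorOf_range_map w m)
  obtain ⟨N, hnN, hN⟩ := hprim n
  have hp_block (b : Fin (d + 1)) : (List.range m).map w <:+: applySeq s 0 N [b] :=
    hpa.trans (applySeq_infix_of_forall_mem hnN hN a b)
  set K := Finset.univ.sup fun b => (applySeq s 0 N [b]).length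
  obtain ⟨M, c, huc⟩ := hw' _ (isFactorOf_range_map w' (2 * K + 1))
  obtain ⟨M₁, hMM₁, hM₁⟩ := hprim M
  have hu_blocks : (List.range (2 * K + 1)).map w' <:+:
      (applySeq s N (max M₁ N) [c]).flatMap fun b => applySeq s 0 N [b] := by
    rw [← applySeq_eq_flatMap, ← applySeq_trans N.zero_le (le_max_right _ _)]
    exact huc.trans <| applySeq_infix_of_forall_mem (hMM₁.trans (le_max_left _ _))
      (mem_applySeq_of_le hne hMM₁ (le_max_left _ _) hM₁) c c
  have hK (b : Fin (d + 1)) : (applySeq s 0 N [b]).length ≤ K :=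
    Finset.le_sup (f := fun b => (applySeq s 0 N [b]).length) (Finset.mem_univ b)
  obtain ⟨b, -, hb⟩ := List.exists_mem_infix_of_infix_flatMap hK (by simp) hu_blocks
  exact (isFactorOf_range_map w' _).of_infix ((hp_block b).trans hb)

/-- If the directive sequence `s` of non-erasing substitutions is primitive, then any
prefix of any element of the `S`-adic subshift `Ω_s` is a factor of any other element
(in particular, `Ω_s` is minimal). -/
theorem prefix_isFactor_of_mem_primitive_Sadic_subshift {d : ℕ} (hd : 1 ≤ d)
    (s : ℕ → Fin (d + 1) → List (Fin (d + 1)))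
    (hne : ∀ n a, s n a ≠ [])
    (hprim : ∀ k : ℕ, ∃ n : ℕ, k ≤ n ∧ ∀ a b : Fin (d + 1), b ∈ applySeq s k n [a])
    (Ω : Set (ℕ → Fin (d + 1)))
    (hΩ : Ω = {w | ∀ l : List (Fin (d + 1)), IsFactorOf l w →
      ∃ n : ℕ, ∃ a : Fin (d + 1), l <:+: applySeq s 0 n [a]}) :
    ∀ w ∈ Ω, ∀ w' ∈ Ω, ∀ m : ℕ,
      IsFactorOf ((List.range m).map w) w' :=
  prefix_isFactor_of_mem_primitive_Sadic_subshift_general s hne hprim Ω hΩ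
end

section
/- Let W ⊆ ℍ, let v ∈ ℝ^{d+1} be a vector with nonnegative coordinates, ‖v‖₁ = 1, whose coordinates are linearly independent over ℚ, and let M be a (d+1)×(d+1) integer matrix with nonnegative entries and determinant ±1. If there exists a nonempty open subset U of P with π_v^{-1}(U) ∩ ℍ ⊆ W, then there exists a nonempty open subset U′ of P with π_{Mv}^{-1}(U′) ∩ ℍ ⊆ M·W, where M·W = {Mz : z ∈ W}. -/
/-- The integer half-space `ℍ = {z ∈ ℤ^{d+1} | h(z) ≥ 0}`, viewed inside `ℝ^{d+1}`. -/
def HH (d : ℕ) : Set (Fin (d + 1) → ℝ) :=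
  {z | (∀ i, ∃ m : ℤ, z i = (m : ℝ)) ∧ 0 ≤ ∑ i, z i}

/-- The hyperplane `P = {z ∈ ℝ^{d+1} | h(z) = 0}`. -/
def Pset (d : ℕ) : Set (Fin (d + 1) → ℝ) :=
  {z | ∑ i, z i = 0}

/-- `piProj y z = z - (h(z)/h(y)) • y`, the projection of `ℝ^{d+1}` onto `P` along `y`. -/
noncomputable def piProj {d : ℕ} (y z : Fin (d + 1) → ℝ) : Fin (d + 1) → ℝ :=
  z - ((∑ i, z i) / (∑ i, y i)) • y

section helpers

variable {d : ℕ}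

lemma piProj_eq_of_sum_one (v z : Fin (d + 1) → ℝ) (hv : ∑ i, v i = 1) :
    piProj v z = z - (∑ i, z i) • v := by
  simp [piProj, hv]

lemma sum_piProj (v z : Fin (d + 1) → ℝ) (hv : ∑ i, v i ≠ 0) :
    ∑ i, piProj v z i = 0 := by
  simp only [piProj, Pi.sub_apply, Pi.smul_apply, smul_eq_mul]
  rw [Finset.sum_sub_distrib, ← Finset.mul_sum, div_mul_cancel₀ _ hv, sub_self]

lemma piProj_sub_smul (v x : Fin (d + 1) → ℝ) (hv : ∑ i, v i = 1) (t : ℝ) :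
    piProj v (x - t • v) = piProj v x := by
  funext i
  simp only [piProj, hv, div_one, Pi.sub_apply, Pi.smul_apply, smul_eq_mul]
  rw [Finset.sum_sub_distrib, ← Finset.mul_sum, hv, mul_one]
  ring

end helpers

/-- If `W ⊆ ℍ` contains `π_v⁻¹(U) ∩ ℍ` for some nonempty open subset `U` of `P`,
`v` is a nonnegative totally irrational unit vector and `M` is a nonnegative integer
matrix of determinant `±1`, then `M·W` contains `π_{Mv}⁻¹(U') ∩ ℍ` for some nonempty
open subset `U'` of `P`. -/
theorem image_worm_has_interior {d : ℕ} (hd : 1 ≤ d)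
    (W : Set (Fin (d + 1) → ℝ)) (hW : W ⊆ HH d)
    (v : Fin (d + 1) → ℝ) (hv : ∀ i, 0 ≤ v i) (hv1 : (∑ i, |v i|) = 1)
    (hirr : LinearIndependent ℚ v)
    (M : Matrix (Fin (d + 1)) (Fin (d + 1)) ℤ)
    (hMpos : ∀ i j, 0 ≤ M i j) (hMdet : M.det = 1 ∨ M.det = -1)
    (U : Set (Fin (d + 1) → ℝ)) (hUP : U ⊆ Pset d)
    (hUopen : IsOpen (Subtype.val ⁻¹' U : Set (Pset d)))
    (hUne : U.Nonempty)
    (hsub : ∀ z ∈ HH d, piProj v z ∈ U → z ∈ W) :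
    ∃ U' : Set (Fin (d + 1) → ℝ), U' ⊆ Pset d ∧
      IsOpen (Subtype.val ⁻¹' U' : Set (Pset d)) ∧ U'.Nonempty ∧
      ∀ z ∈ HH d, piProj ((M.map (Int.cast : ℤ → ℝ)).mulVec v) z ∈ U' →
        z ∈ (fun w => (M.map (Int.cast : ℤ → ℝ)).mulVec w) '' W := by
  classical
  set A : Matrix (Fin (d+1)) (Fin (d+1)) ℝ := M.map (Int.cast : ℤ → ℝ) with hA
  -- basic facts about v
  have hvsum : ∑ i, v i = 1 := by
    rw [← hv1]; exact Finset.sum_congr rfl fun i _ => (abs_of_nonneg (hv i)).symm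
  -- determinant is a unit
  have hdet : IsUnit M.det := by
    rcases hMdet with h | h
    · rw [h]; exact isUnit_one
    · rw [h]; exact isUnit_one.neg
  set N : Matrix (Fin (d+1)) (Fin (d+1)) ℤ := M⁻¹ with hN
  have hMN : M * N = 1 := Matrix.mul_nonsing_inv M hdet
  have hNM : N * M = 1 := Matrix.nonsing_inv_mul M hdet
  set B : Matrix (Fin (d+1)) (Fin (d+1)) ℝ := N.map (Int.cast : ℤ → ℝ) with hB
  have hmapcast : ⇑(Int.castRingHom ℝ) = (Int.cast : ℤ → ℝ) := rfl
  have hAB : A * B = 1 := by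
    rw [hA, hB, ← hmapcast, ← Matrix.map_mul, hMN, Matrix.map_one _ (by simp) (by simp)]
  have hBA : B * A = 1 := by
    rw [hA, hB, ← hmapcast, ← Matrix.map_mul, hNM, Matrix.map_one _ (by simp) (by simp)]
  -- column sums
  set col : Fin (d+1) → ℤ := fun j => ∑ i, M i j with hcol
  have hcol1 : ∀ j, 1 ≤ col j := by
    intro j
    by_contra hle
    push_neg at hle
    have h0 : col j = 0 := le_antisymm (by omega) (Finset.sum_nonneg fun i _ => hMpos i j)
    have hz : ∀ i, M i j = 0 := by
      intro i
      have := (Finset.sum_eq_zero_iff_of_nonneg (fun i _ => hMpos i j)).mp h0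
      exact this i (Finset.mem_univ i)
    have := Matrix.det_eq_zero_of_column_eq_zero j hz
    rcases hMdet with h | h <;> omega
  -- the linear functional ℓ
  set ℓ : (Fin (d+1) → ℝ) → ℝ := fun x => ∑ j, (col j : ℝ) * x j with hℓdef
  have hℓ : ∀ x, ∑ i, (A.mulVec x) i = ℓ x := by
    intro x
    simp only [hℓdef, hcol, hA, Matrix.mulVec, dotProduct, Matrix.map_apply]
    rw [Finset.sum_comm]
    refine Finset.sum_congr rfl fun j _ => ?_
    rw [← Finset.sum_mul]
    push_cast
    ring
  have hℓadd : ∀ (x q : Fin (d+1) → ℝ) (t : ℝ), ℓ (x + t • q) = ℓ x + t * ℓ q := by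
    intro x q t
    simp only [hℓdef, Pi.add_apply, Pi.smul_apply, smul_eq_mul, mul_add, Finset.mul_sum]
    rw [Finset.sum_add_distrib]
    congr 1
    refine Finset.sum_congr rfl fun j _ => by ring
  set c : ℝ := ℓ v with hcdef
  have hc1 : 1 ≤ c := by
    calc (1:ℝ) = ∑ i, v i := hvsum.symm
    _ = ∑ j, 1 * v j := by simp
    _ ≤ ∑ j, (col j : ℝ) * v j := by
        refine Finset.sum_le_sum fun j _ => ?_
        exact mul_le_mul_of_nonneg_right (by exact_mod_cast hcol1 j) (hv j)
  have hcpos : (0:ℝ) < c := lt_of_lt_of_le one_pos hc1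
  have hAvsum : ∑ i, (A.mulVec v) i = c := hℓ v
  -- ψ commutes with projection
  have claim1 : ∀ z, piProj v (B.mulVec (piProj (A.mulVec v) z)) = piProj v (B.mulVec z) := by
    intro z
    have h1 : piProj (A.mulVec v) z = z - ((∑ i, z i) / c) • (A.mulVec v) := by
      rw [piProj, hAvsum]
    rw [h1]
    have h2 : B.mulVec (z - ((∑ i, z i) / c) • (A.mulVec v))
        = B.mulVec z - ((∑ i, z i) / c) • v := by
      have hBAv : B.mulVec (A.mulVec v) = v := by
        rw [Matrix.mulVec_mulVec, hBA, Matrix.one_mulVec]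
      rw [Matrix.mulVec_sub, Matrix.mulVec_smul, hBAv]
    rw [h2, piProj_sub_smul _ _ hvsum]
  -- lipschitz bound for ℓ
  set K : ℝ := ∑ j, (col j : ℝ) with hKdef
  have hcol0 : ∀ j, (0:ℝ) ≤ (col j : ℝ) := fun j => by exact_mod_cast le_trans zero_le_one (hcol1 j)
  have hK0 : 0 ≤ K := Finset.sum_nonneg fun j _ => hcol0 j
  have hKlip : ∀ x y, |ℓ x - ℓ y| ≤ K * dist x y := by
    intro x y
    have h1 : ℓ x - ℓ y = ∑ j, (col j : ℝ) * (x j - y j) := by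
      simp only [hℓdef, mul_sub]
      rw [Finset.sum_sub_distrib]
    rw [h1]
    calc |∑ j, (col j : ℝ) * (x j - y j)| ≤ ∑ j, |(col j : ℝ) * (x j - y j)| :=
          Finset.abs_sum_le_sum_abs _ _
    _ ≤ ∑ j, (col j : ℝ) * dist x y := by
        refine Finset.sum_le_sum fun j _ => ?_
        rw [abs_mul, abs_of_nonneg (hcol0 j)]
        refine mul_le_mul_of_nonneg_left ?_ (hcol0 j)
        have : x j - y j = (x - y) j := rfl
        rw [this, ← Real.norm_eq_abs, dist_eq_norm]
        exact norm_le_pi_norm (x - y) j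
    _ = K * dist x y := by rw [hKdef, Finset.sum_mul]
  -- open ball inside U around u₀
  obtain ⟨u₀, hu₀U⟩ := hUne
  have hu₀P : u₀ ∈ Pset d := hUP hu₀U
  obtain ⟨ε, hε, hball⟩ : ∃ ε > 0, ∀ u, u ∈ Pset d → dist u u₀ < ε → u ∈ U := by
    obtain ⟨ε, hε, hb⟩ := Metric.isOpen_iff.mp hUopen ⟨u₀, hu₀P⟩ hu₀U
    refine ⟨ε, hε, fun u hu hdu => ?_⟩
    have : (⟨u, hu⟩ : Pset d) ∈ Metric.ball (⟨u₀, hu₀P⟩ : Pset d) ε := by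
      rw [Metric.mem_ball, Subtype.dist_eq]; exact hdu
    exact hb this
  -- key construction
  have key : ∃ u₁ ∈ Pset d, ∃ δ > 0,
      (∀ u ∈ Pset d, dist u u₁ < δ → u ∈ U) ∧
      (∀ u ∈ Pset d, dist u u₁ < δ → ∀ n m : ℤ, 0 ≤ n → 1 ≤ m → ℓ u ≠ n + m * c) := by
    by_cases hcase : ∀ j, col j = col 0
    · -- ℓ vanishes on P
      refine ⟨u₀, hu₀P, ε, hε, fun u hu hdu => hball u hu hdu, ?_⟩
      intro u hu _ n m hn hm hcontra
      have hℓu : ℓ u = 0 := by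
        rw [hℓdef]
        calc ∑ j, (col j : ℝ) * u j = ∑ j, (col 0 : ℝ) * u j := by
              refine Finset.sum_congr rfl fun j _ => by rw [hcase j]
        _ = (col 0 : ℝ) * ∑ j, u j := by rw [Finset.mul_sum]
        _ = 0 := by rw [hu]; ring
      have hn' : (0:ℝ) ≤ (n:ℝ) := by exact_mod_cast hn
      have hm' : (1:ℝ) ≤ (m:ℝ) := by exact_mod_cast hm
      nlinarith
    · push_neg at hcase
      obtain ⟨j₁, hj₁⟩ := hcase
      set γ : ℝ := ((col j₁ : ℤ) : ℝ) - ((col 0 : ℤ) : ℝ) with hγdef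
      have hγ0 : γ ≠ 0 := by
        rw [hγdef]
        intro h
        apply hj₁
        exact_mod_cast sub_eq_zero.mp h
      set p : Fin (d+1) → ℝ := Pi.single j₁ 1 - Pi.single 0 1 with hpdef
      have hpsum : ∑ i, p i = 0 := by
        simp [hpdef, Finset.sum_sub_distrib, Pi.single_apply, Finset.sum_ite_eq']
      have hℓp : ℓ p = γ := by
        simp only [hℓdef, hpdef, hγdef, Pi.sub_apply, Pi.single_apply, mul_sub, mul_ite, mul_one, mul_zero]
        rw [Finset.sum_sub_distrib]
        simp [Finset.sum_ite_eq']
      set β : ℝ := |γ| * ε / (2 * (‖p‖ + 1)) with hβdef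
      have hnp : (0:ℝ) < ‖p‖ + 1 := by positivity
      have hβ : 0 < β := by
        have : 0 < |γ| := abs_pos.mpr hγ0
        positivity
      set R : ℝ := ℓ u₀ + β + 1 with hRdef
      set T : Set ℝ := {x | ∃ n m : ℤ, 0 ≤ n ∧ 1 ≤ m ∧ x = n + m * c ∧ x ≤ R} with hTdef
      have hTfin : T.Finite := by
        have hsub' : T ⊆ (fun q : ℤ × ℤ => (q.1 : ℝ) + q.2 * c) ''
            (Set.Icc 0 ⌈R⌉ ×ˢ Set.Icc 1 ⌈R⌉) := by
          rintro x ⟨n, m, hn, hm, rfl, hxR⟩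
          have hcR : (n:ℝ) + m * c ≤ R := hxR
          have hm1 : (1:ℝ) ≤ (m:ℝ) := by exact_mod_cast hm
          have hn0 : (0:ℝ) ≤ (n:ℝ) := by exact_mod_cast hn
          have hmc : c ≤ (m:ℝ) * c := le_mul_of_one_le_left hcpos.le hm1
          have hnR : (n:ℝ) ≤ R := by nlinarith
          have hmR : (m:ℝ) ≤ R := by nlinarith
          have hnR' : n ≤ ⌈R⌉ := by exact_mod_cast hnR.trans (Int.le_ceil R)
          have hmR' : m ≤ ⌈R⌉ := by exact_mod_cast hmR.trans (Int.le_ceil R)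
          exact ⟨(n, m), ⟨Set.mem_Icc.mpr ⟨hn, hnR'⟩, Set.mem_Icc.mpr ⟨hm, hmR'⟩⟩, rfl⟩
        exact Set.Finite.subset (Set.Finite.image _ ((Set.finite_Icc _ _).prod (Set.finite_Icc _ _))) hsub'
      -- choose y avoiding T
      obtain ⟨y, hy1, hy2, ρ, hρ, hρT⟩ : ∃ y, ℓ u₀ - β < y ∧ y < ℓ u₀ + β ∧
          ∃ ρ > 0, ∀ x, dist x y < ρ → x ∉ T := by
        have hio : (Set.Ioo (ℓ u₀ - β) (ℓ u₀ + β)).Infinite := Set.Ioo_infinite (by linarith)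
        obtain ⟨y, hy⟩ := (hio.diff hTfin).nonempty
        obtain ⟨hyI, hyT⟩ := hy
        obtain ⟨ρ, hρ, hb⟩ := Metric.isOpen_iff.mp hTfin.isClosed.isOpen_compl y hyT
        exact ⟨y, hyI.1, hyI.2, ρ, hρ, fun x hx => hb hx⟩
      set s : ℝ := (y - ℓ u₀) / γ with hsdef
      set u₁ : Fin (d+1) → ℝ := u₀ + s • p with hu₁def
      have hu₁P : u₁ ∈ Pset d := by
        show ∑ i, u₁ i = 0
        simp only [hu₁def, Pi.add_apply, Pi.smul_apply, smul_eq_mul]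
        rw [Finset.sum_add_distrib, ← Finset.mul_sum, hpsum, hu₀P]
        ring
      have hℓu₁ : ℓ u₁ = y := by
        rw [hu₁def, hℓadd, hℓp, hsdef, div_mul_cancel₀ _ hγ0]
        ring
      have hs : |s| < ε / (2 * (‖p‖ + 1)) := by
        rw [hsdef, abs_div]
        rw [div_lt_iff₀ (abs_pos.mpr hγ0)]
        have h1 : |y - ℓ u₀| < β := abs_sub_lt_iff.mpr ⟨by linarith, by linarith⟩
        calc |y - ℓ u₀| < β := h1
        _ = ε / (2 * (‖p‖ + 1)) * |γ| := by rw [hβdef]; ring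
      have hd10 : dist u₁ u₀ < ε / 2 := by
        rw [hu₁def, dist_eq_norm, add_sub_cancel_left, norm_smul, Real.norm_eq_abs]
        calc |s| * ‖p‖ ≤ |s| * (‖p‖ + 1) := by
              refine mul_le_mul_of_nonneg_left (by linarith) (abs_nonneg s)
        _ < ε / (2 * (‖p‖ + 1)) * (‖p‖ + 1) := by
              exact mul_lt_mul_of_pos_right hs hnp
        _ = ε / 2 := by field_simp
      have hmin1 : 0 < min ρ 1 := lt_min hρ one_pos
      obtain ⟨δ, hδ, hδ1, hδ2⟩ : ∃ δ : ℝ, 0 < δ ∧ δ ≤ ε / 2 ∧ K * δ < min ρ 1 := by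
        refine ⟨min (ε / 2) (min ρ 1 / (K + 1)),
          lt_min (by linarith) (div_pos hmin1 (by linarith)),
          min_le_left _ _, ?_⟩
        calc K * min (ε / 2) (min ρ 1 / (K + 1)) ≤ K * (min ρ 1 / (K + 1)) :=
              mul_le_mul_of_nonneg_left (min_le_right _ _) hK0
        _ < min ρ 1 := by
              have h2 : K / (K + 1) < 1 := (div_lt_one (by linarith)).mpr (by linarith)
              calc K * (min ρ 1 / (K + 1)) = min ρ 1 * (K / (K + 1)) := by ring
              _ < min ρ 1 * 1 := mul_lt_mul_of_pos_left h2 hmin1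
              _ = min ρ 1 := mul_one _
      refine ⟨u₁, hu₁P, δ, hδ, ?_, ?_⟩
      · intro u hu hdu
        refine hball u hu ?_
        calc dist u u₀ ≤ dist u u₁ + dist u₁ u₀ := dist_triangle _ _ _
        _ < δ + ε / 2 := by exact add_lt_add hdu hd10
        _ ≤ ε / 2 + ε / 2 := by linarith
        _ = ε := by ring
      · intro u hu hdu n m hn hm hcontra
        have hlu : |ℓ u - y| < min ρ 1 := by
          rw [← hℓu₁]
          calc |ℓ u - ℓ u₁| ≤ K * dist u u₁ := hKlip u u₁
          _ ≤ K * δ := mul_le_mul_of_nonneg_left hdu.le hK0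
          _ < min ρ 1 := hδ2
        have hlu1 : |ℓ u - y| < 1 := lt_of_lt_of_le hlu (min_le_right _ _)
        have hluρ : |ℓ u - y| < ρ := lt_of_lt_of_le hlu (min_le_left _ _)
        have hmemT : ℓ u ∈ T := by
          refine ⟨n, m, hn, hm, hcontra, ?_⟩
          have h1 : ℓ u < y + 1 := by
            have := abs_sub_lt_iff.mp hlu1
            linarith [this.1]
          linarith
        exact hρT (ℓ u) (by rw [Real.dist_eq]; exact hluρ) hmemT
  -- build U'
  obtain ⟨u₁, hu₁P, δ, hδ, hVU, hVav⟩ := key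
  set U' : Set (Fin (d+1) → ℝ) :=
    {u' | u' ∈ Pset d ∧ dist (piProj v (B.mulVec u')) u₁ < δ} with hU'def
  have hvne : (∑ i, v i) ≠ 0 := by rw [hvsum]; exact one_ne_zero
  have hAvne : (∑ i, (A.mulVec v) i) ≠ 0 := by rw [hAvsum]; exact ne_of_gt hcpos
  refine ⟨U', fun u' h => h.1, ?_, ?_, ?_⟩
  · -- openness
    have hcont : Continuous fun q : (Pset d) => piProj v (B.mulVec q.val) := by
      have h1 : Continuous fun x : Fin (d+1) → ℝ => B.mulVec x := by
        refine continuous_pi fun i => ?_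
        simp only [Matrix.mulVec, dotProduct]
        exact continuous_finset_sum _ fun j _ => continuous_const.mul (continuous_apply j)
      have h2 : Continuous fun x : Fin (d+1) → ℝ => piProj v x := by
        unfold piProj
        refine Continuous.sub continuous_id ?_
        exact Continuous.smul ((continuous_finset_sum _ fun i _ => continuous_apply i).div_const _) continuous_const
      exact (h2.comp h1).comp continuous_subtype_val
    have heq : (Subtype.val ⁻¹' U' : Set (Pset d)) =
        (fun q : (Pset d) => piProj v (B.mulVec q.val)) ⁻¹' (Metric.ball u₁ δ) := by
      ext q
      simp only [Set.mem_preimage, hU'def, Set.mem_setOf_eq, Metric.mem_ball]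
      exact ⟨fun h => h.2, fun h => ⟨q.2, h⟩⟩
    rw [heq]
    exact Metric.isOpen_ball.preimage hcont
  · -- nonempty
    refine ⟨piProj (A.mulVec v) (A.mulVec u₁), sum_piProj _ _ hAvne, ?_⟩
    rw [claim1]
    have h1 : B.mulVec (A.mulVec u₁) = u₁ := by
      rw [Matrix.mulVec_mulVec, hBA, Matrix.one_mulVec]
    rw [h1, piProj_eq_of_sum_one _ _ hvsum, hu₁P]
    simpa using hδ
  · -- main inclusion
    intro z hz hz'
    obtain ⟨hzint, hzsum⟩ := hz
    obtain ⟨_, hzd⟩ := hz'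
    rw [claim1] at hzd
    set w : Fin (d+1) → ℝ := B.mulVec z with hwdef
    set u : Fin (d+1) → ℝ := piProj v w with hudef
    have huP : u ∈ Pset d := sum_piProj _ _ hvne
    have huU : u ∈ U := hVU u huP hzd
    have hzAw : z = A.mulVec w := by
      rw [hwdef, Matrix.mulVec_mulVec, hAB, Matrix.one_mulVec]
    -- w has integer coordinates
    choose mz hmz using hzint
    have hwint : ∀ i, ∃ m : ℤ, w i = (m : ℝ) := by
      intro i
      refine ⟨∑ j, N i j * mz j, ?_⟩
      have : w i = ∑ j, ((N i j : ℝ)) * z j := by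
        simp [hwdef, hB, Matrix.mulVec, dotProduct, Matrix.map_apply]
      rw [this]
      push_cast
      exact Finset.sum_congr rfl fun j _ => by rw [hmz j]
    choose mw hmw using hwint
    -- sum of w
    have hsw : ∑ i, w i = ((∑ i, mw i : ℤ) : ℝ) := by
      push_cast
      exact Finset.sum_congr rfl fun i _ => hmw i
    have hszint : ∑ i, z i = ((∑ i, mz i : ℤ) : ℝ) := by
      push_cast
      exact Finset.sum_congr rfl fun i _ => hmz i
    have hsz : ∑ i, z i = ℓ w := by rw [hzAw]; exact hℓ w
    have hwdecomp : w = u + (∑ i, w i) • v := by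
      rw [hudef, piProj_eq_of_sum_one _ _ hvsum]
      funext i
      simp
    have hℓw : ℓ w = ℓ u + (∑ i, w i) * c := by
      rw [hcdef]
      nth_rewrite 1 [hwdecomp]
      exact hℓadd u v (∑ i, w i)
    -- show sum of w nonnegative
    have hw0 : 0 ≤ ∑ i, w i := by
      by_contra hneg
      push_neg at hneg
      have hkw : ((∑ i, mw i : ℤ) : ℝ) < 0 := hsw ▸ hneg
      have hkwi : (∑ i, mw i : ℤ) < 0 := by exact_mod_cast hkw
      have hnz : (0:ℤ) ≤ ∑ i, mz i := by
        have : (0:ℝ) ≤ ((∑ i, mz i : ℤ) : ℝ) := hszint ▸ hzsum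
        exact_mod_cast this
      have hℓu : ℓ u = ((∑ i, mz i : ℤ) : ℝ) + ((-(∑ i, mw i) : ℤ) : ℝ) * c := by
        have h1 : ((∑ i, mz i : ℤ) : ℝ) = ℓ u + ((∑ i, mw i : ℤ) : ℝ) * c := by
          rw [← hszint, hsz, hℓw, hsw]
        push_cast at h1 ⊢
        linarith
      exact hVav u huP hzd (∑ i, mz i) (-(∑ i, mw i)) hnz (by omega) hℓu
    have hwHH : w ∈ HH d := ⟨fun i => ⟨mw i, hmw i⟩, hw0⟩
    have hwW : w ∈ W := hsub w hwHH huU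
    exact ⟨w, hwW, hzAw.symm⟩
end

section
/- An infinite word u : ℕ → A over A = {0,…,d} is balanced if and only if there exists a vector v ∈ ℝ^{d+1} with nonnegative coordinates and ‖v‖₁ = 1 such that π_v(W(u)) is a bounded subset of P. -/
/-- The prefix of length `n` of the infinite word `u`. -/
def pref {d : ℕ} (u : ℕ → Fin (d + 1)) (n : ℕ) : List (Fin (d + 1)) :=
  (List.range n).map u

/-- The abelianization (letter-count vector) of a finite word, viewed in `ℝ^{d+1}`. -/
def abR {d : ℕ} (w : List (Fin (d + 1))) : Fin (d + 1) → ℝ :=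
  fun a => (w.count a : ℝ)

/-- The worm of an infinite word: the abelianizations of its finite prefixes. -/
def worm {d : ℕ} (u : ℕ → Fin (d + 1)) : Set (Fin (d + 1) → ℝ) :=
  {w | ∃ n : ℕ, w = abR (pref u n)}

lemma pref_add {d : ℕ} (u : ℕ → Fin (d + 1)) (k n : ℕ) :
    pref u (k + n) = pref u k ++ (List.range n).map (fun j => u (k + j)) := by
  unfold pref
  rw [List.range_add, List.map_append, List.map_map]
  rfl

lemma sum_count {d : ℕ} (l : List (Fin (d + 1))) :
    ∑ a : Fin (d + 1), l.count a = l.length := by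
  induction l with
  | nil => simp
  | cons x l ih => simp [List.count_cons, Finset.sum_add_distrib, ih]

lemma sum_countR {d : ℕ} (l : List (Fin (d + 1))) :
    ∑ a : Fin (d + 1), (l.count a : ℝ) = (l.length : ℝ) := by
  rw [← Nat.cast_sum]
  exact_mod_cast congrArg (Nat.cast : ℕ → ℝ) (sum_count l)

lemma window_isFactor {d : ℕ} (u : ℕ → Fin (d + 1)) (k n : ℕ) :
    IsFactorOf ((List.range n).map (fun j => u (k + j))) u := by
  refine ⟨k, ?_⟩
  rw [List.length_map, List.length_range]

lemma pref_isFactor {d : ℕ} (u : ℕ → Fin (d + 1)) (n : ℕ) :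
    IsFactorOf (pref u n) u := by
  refine ⟨0, ?_⟩
  unfold pref
  rw [List.length_map, List.length_range]
  simp

lemma count_mul_bounds {d : ℕ} (u : ℕ → Fin (d + 1)) (K : ℝ)
    (hw : ∀ k n a, |((((List.range n).map (fun j => u (k + j))).count a : ℝ)) - ((pref u n).count a : ℝ)| ≤ K)
    (m n : ℕ) (a : Fin (d + 1)) :
    (m : ℝ) * (((pref u n).count a : ℝ) - K) ≤ ((pref u (m * n)).count a : ℝ) ∧
    ((pref u (m * n)).count a : ℝ) ≤ (m : ℝ) * (((pref u n).count a : ℝ) + K) := by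
  induction m with
  | zero => simp [pref]
  | succ m ih =>
    have hsplit : pref u ((m + 1) * n) = pref u (m * n) ++ (List.range n).map (fun j => u (m * n + j)) := by
      rw [add_one_mul]; exact pref_add u (m * n) n
    have hc : ((pref u ((m+1) * n)).count a : ℝ)
        = ((pref u (m * n)).count a : ℝ) + (((List.range n).map (fun j => u (m * n + j))).count a : ℝ) := by
      rw [hsplit, List.count_append]; push_cast; ring
    have hb := abs_le.mp (hw (m * n) n a)
    constructor
    · rw [hc]; push_cast; nlinarith [ih.1, hb.1]
    · rw [hc]; push_cast; nlinarith [ih.2, hb.2]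

lemma exists_alpha (F : ℕ → ℝ) (K : ℝ) (hK : 0 ≤ K) (hF0 : ∀ n, 0 ≤ F n)
    (hcross : ∀ m n : ℕ, 1 ≤ m → 1 ≤ n → (F m - K) / m ≤ (F n + K) / n)
    (hF00 : F 0 = 0) :
    ∃ α : ℝ, 0 ≤ α ∧ ∀ n : ℕ, |F n - n * α| ≤ K := by
  set S : Set ℝ := {x | ∃ n : ℕ, 1 ≤ n ∧ x = (F n + K) / n} with hS
  have hne : S.Nonempty := ⟨(F 1 + K) / (1:ℕ), 1, le_refl 1, rfl⟩
  have hpos : ∀ x ∈ S, (0:ℝ) ≤ x := by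
    rintro x ⟨n, hn, rfl⟩
    have hnpos : (0:ℝ) < n := by exact_mod_cast hn
    have := hF0 n
    positivity
  have hbdd : BddBelow S := ⟨0, fun x hx => hpos x hx⟩
  refine ⟨sInf S, le_csInf hne hpos, ?_⟩
  intro n
  rcases Nat.eq_zero_or_pos n with rfl | hn
  · simpa [hF00] using hK
  have hnpos : (0:ℝ) < n := by exact_mod_cast hn
  have hub : sInf S ≤ (F n + K) / n := csInf_le hbdd ⟨n, hn, rfl⟩
  have hlb : (F n - K) / n ≤ sInf S :=
    le_csInf hne (by rintro x ⟨m, hm, rfl⟩; exact hcross n m hn hm)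
  have h1 : (n:ℝ) * sInf S ≤ F n + K := by
    have := mul_le_mul_of_nonneg_left hub (le_of_lt hnpos)
    rwa [mul_div_cancel₀ _ (ne_of_gt hnpos)] at this
  have h2 : F n - K ≤ (n:ℝ) * sInf S := by
    have := mul_le_mul_of_nonneg_left hlb (le_of_lt hnpos)
    rwa [mul_div_cancel₀ _ (ne_of_gt hnpos)] at this
  rw [abs_le]; constructor <;> linarith

lemma abs_eq_zero_of_arch (s C : ℝ) (h : ∀ n : ℕ, 1 ≤ n → (n:ℝ) * |s| ≤ C) : s = 0 := by
  by_contra hs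
  have hpos : 0 < |s| := abs_pos.mpr hs
  obtain ⟨n, hn⟩ := exists_nat_gt (C / |s|)
  have hn1 : 1 ≤ n + 1 := Nat.le_add_left 1 n
  have h1 := h (n + 1) hn1
  have h2 : C / |s| < ((n + 1 : ℕ) : ℝ) := by push_cast; push_cast at hn; linarith
  have h3 : C < ((n + 1 : ℕ) : ℝ) * |s| := (div_lt_iff₀ hpos).mp h2
  linarith

/-- An infinite word `u` is balanced if and only if there is a nonnegative unit vector
`v` such that `π_v(W(u))` is bounded. -/
theorem balanced_iff_bounded_projection {d : ℕ} (hd : 1 ≤ d) (u : ℕ → Fin (d + 1)) :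
    (∃ K : ℕ, 1 ≤ K ∧ ∀ f g : List (Fin (d + 1)), IsFactorOf f u → IsFactorOf g u →
      f.length = g.length → ∀ a : Fin (d + 1),
        |(f.count a : ℤ) - (g.count a : ℤ)| ≤ (K : ℤ)) ↔
    (∃ v : Fin (d + 1) → ℝ, (∀ i, 0 ≤ v i) ∧ (∑ i, |v i|) = 1 ∧
      ∃ K : ℝ, ∀ w ∈ worm u, (∑ i, |piProj v w i|) ≤ K) := by
  constructor
  · rintro ⟨K, hK1, hbal⟩
    set KR : ℝ := (K : ℝ) with hKR
    have hKR0 : (0:ℝ) ≤ KR := by positivity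
    -- window bound
    have hw : ∀ k n (a : Fin (d+1)),
        |((((List.range n).map (fun j => u (k + j))).count a : ℝ)) - ((pref u n).count a : ℝ)| ≤ KR := by
      intro k n a
      have hlen : ((List.range n).map (fun j => u (k + j))).length = (pref u n).length := by
        simp [pref]
      have := hbal _ _ (window_isFactor u k n) (pref_isFactor u n) hlen a
      rw [← @Int.cast_le ℝ] at this
      push_cast at this
      exact this
    -- cross inequality
    set F : Fin (d+1) → ℕ → ℝ := fun a n => ((pref u n).count a : ℝ) with hF
    have hcross : ∀ a, ∀ m n : ℕ, 1 ≤ m → 1 ≤ n →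
        (F a m - KR) / m ≤ (F a n + KR) / n := by
      intro a m n hm hn
      have h1 := (count_mul_bounds u KR hw n m a).1
      have h2 := (count_mul_bounds u KR hw m n a).2
      rw [mul_comm n m] at h1
      have hmn : (F a m - KR) * n ≤ (F a n + KR) * m := by
        simp only [hF] at *
        nlinarith
      have hmpos : (0:ℝ) < m := by exact_mod_cast hm
      have hnpos : (0:ℝ) < n := by exact_mod_cast hn
      rw [div_le_div_iff₀ hmpos hnpos]
      exact hmn
    have halpha : ∀ a : Fin (d+1), ∃ α : ℝ, 0 ≤ α ∧ ∀ n : ℕ, |F a n - n * α| ≤ KR := by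
      intro a
      refine exists_alpha (F a) KR hKR0 (fun n => by positivity) (hcross a) ?_
      simp [hF, pref]
    choose v hv0 hv using halpha
    -- sum of v is 1
    have hsum : ∑ a, v a = 1 := by
      have harch : ∀ n : ℕ, 1 ≤ n → (n:ℝ) * |1 - ∑ a, v a| ≤ (d+1) * KR := by
        intro n hn
        have hlen : ∑ a : Fin (d+1), F a n = (n : ℝ) := by
          simp only [hF]
          rw [sum_countR]
          simp [pref]
        have h1 : |∑ a : Fin (d+1), (F a n - n * v a)| ≤ (d+1) * KR := by
          calc |∑ a : Fin (d+1), (F a n - n * v a)|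
              ≤ ∑ a : Fin (d+1), |F a n - n * v a| := Finset.abs_sum_le_sum_abs _ _
            _ ≤ ∑ _a : Fin (d+1), KR := Finset.sum_le_sum (fun a _ => hv a n)
            _ = (d+1) * KR := by simp [Finset.card_univ, mul_comm]
        have h2 : ∑ a : Fin (d+1), (F a n - n * v a) = (n:ℝ) * (1 - ∑ a, v a) := by
          rw [Finset.sum_sub_distrib, hlen, ← Finset.mul_sum]
          ring
        rw [h2] at h1
        rw [abs_mul, abs_of_nonneg (by positivity : (0:ℝ) ≤ (n:ℝ))] at h1
        exact h1
      have := abs_eq_zero_of_arch (1 - ∑ a, v a) ((d+1) * KR) harch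
      linarith
    refine ⟨v, hv0, ?_, ?_⟩
    · rw [← hsum]
      exact Finset.sum_congr rfl (fun a _ => abs_of_nonneg (hv0 a))
    · refine ⟨(d+1) * KR, ?_⟩
      rintro w ⟨n, rfl⟩
      have hsumw : ∑ i, abR (pref u n) i = (n : ℝ) := by
        unfold abR
        rw [sum_countR]
        simp [pref]
      have hpi : ∀ a, piProj v (abR (pref u n)) a = F a n - n * v a := by
        intro a
        unfold piProj
        simp only [Pi.sub_apply, Pi.smul_apply, smul_eq_mul]
        rw [hsumw, hsum]
        simp [hF, abR]
      calc ∑ i, |piProj v (abR (pref u n)) i|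
          = ∑ i, |F i n - n * v i| := by
            exact Finset.sum_congr rfl (fun i _ => by rw [hpi i])
        _ ≤ ∑ _i : Fin (d+1), KR := Finset.sum_le_sum (fun i _ => hv i n)
        _ = (d+1) * KR := by simp [Finset.card_univ, mul_comm]
  · rintro ⟨v, hv0, hv1, K, hb⟩
    have hsum : ∑ i, v i = 1 := by
      rw [← hv1]
      exact Finset.sum_congr rfl (fun a _ => (abs_of_nonneg (hv0 a)).symm)
    have hK0 : (0:ℝ) ≤ K := by
      have := hb (abR (pref u 0)) ⟨0, rfl⟩
      refine le_trans ?_ this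
      positivity
    -- coordinatewise bound on prefixes
    have key : ∀ n : ℕ, ∀ a : Fin (d+1), |((pref u n).count a : ℝ) - n * v a| ≤ K := by
      intro n a
      have hsumw : ∑ i, abR (pref u n) i = (n : ℝ) := by
        unfold abR
        rw [sum_countR]
        simp [pref]
      have hpi : piProj v (abR (pref u n)) a = ((pref u n).count a : ℝ) - n * v a := by
        unfold piProj
        simp only [Pi.sub_apply, Pi.smul_apply, smul_eq_mul]
        rw [hsumw, hsum]
        simp [abR]
      have hsingle : |piProj v (abR (pref u n)) a| ≤ ∑ i, |piProj v (abR (pref u n)) i| :=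
        Finset.single_le_sum (f := fun i => |piProj v (abR (pref u n)) i|)
          (fun i _ => abs_nonneg _) (Finset.mem_univ a)
      rw [hpi] at hsingle
      exact le_trans hsingle (hb _ ⟨n, rfl⟩)
    -- bound on factors
    have hfac : ∀ f : List (Fin (d+1)), IsFactorOf f u → ∀ a : Fin (d+1),
        |(f.count a : ℝ) - f.length * v a| ≤ 2 * K := by
      rintro f ⟨i, hf⟩ a
      have hsplit : pref u (i + f.length) = pref u i ++ f := by
        rw [pref_add]
        congr 1
        exact hf.symm
      have hc : (f.count a : ℝ) = ((pref u (i + f.length)).count a : ℝ) - ((pref u i).count a : ℝ) := by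
        rw [hsplit, List.count_append]
        push_cast
        ring
      have h1 := key (i + f.length) a
      have h2 := key i a
      rw [abs_le] at h1 h2 ⊢
      push_cast at h1
      constructor <;> [nlinarith [h1.1, h2.2, hc]; nlinarith [h1.2, h2.1, hc]]
    -- conclude
    refine ⟨1 + Nat.ceil (4 * K), Nat.le_add_right 1 _, ?_⟩
    intro f g hfu hgu hlen a
    have h1 := hfac f hfu a
    have h2 := hfac g hgu a
    have hR : |(f.count a : ℝ) - (g.count a : ℝ)| ≤ 4 * K := by
      rw [hlen] at h1
      rw [abs_le] at h1 h2 ⊢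
      constructor <;> [linarith [h1.1, h2.2]; linarith [h1.2, h2.1]]
    rw [← @Int.cast_le ℝ]
    push_cast
    have hceil : (4 * K : ℝ) ≤ 1 + (Nat.ceil (4 * K) : ℝ) := by
      have := Nat.le_ceil (4 * K)
      linarith
    exact le_trans hR hceil
end

section
/- Let (M_n)_{n∈ℕ} be (d+1)×(d+1) integer matrices with nonnegative entries and determinant ±1, and write M_{[k,n)} = M_k M_{k+1}⋯M_{n−1}. Let v ∈ ℝ^{d+1} have nonnegative coordinates that are linearly independent over ℚ, and suppose ⋂_{n∈ℕ} M_{[0,n)}(ℝ_{≥0}^{d+1}) = {t·v : t ≥ 0}. Then the sequence is primitive: for every k ∈ ℕ there exists n ≥ k such that every entry of M_{[k,n)} is positive. -/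
/-!
The cones `M_{[0,n)}(ℝ≥0^{d+1})` are closed (the products are invertible) and nested, so their
slices by the standard simplex are nested compact sets shrinking to `v / ∑ v`; in particular the
`j`-th column of `M_{[0,n)}`, normalised to sum `1`, tends to `v / ∑ v`. Applying the integer
matrix `M_{[0,k)}⁻¹` turns it into the normalised `j`-th column of `M_{[k,n)}`, which is
nonnegative and tends to `M_{[0,k)}⁻¹ v / ∑ v`. Every row of `M_{[0,k)}⁻¹` is a nonzero integer
vector, so total irrationality makes every coordinate of this limit nonzero, hence positive, and
the entries of `M_{[k,n)}` are eventually positive.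
-/

/-- `prodM M k n = M_k * M_{k+1} * ⋯ * M_{n-1}` (the identity when `n ≤ k`). -/
def prodM {d : ℕ} (M : ℕ → Matrix (Fin (d + 1)) (Fin (d + 1)) ℤ) (k n : ℕ) :
    Matrix (Fin (d + 1)) (Fin (d + 1)) ℤ :=
  ((List.range' k (n - k)).map M).prod

open Filter Topology Matrix

theorem tendsto_of_mem_of_iInter_subset_singleton {X : Type*} [TopologicalSpace X]
    {K : ℕ → Set X} (hanti : Antitone K) (hcpt : ∀ n, IsCompact (K n))
    (hclosed : ∀ n, IsClosed (K n)) {p : X} (hsub : ⋂ n, K n ⊆ {p}) {u : ℕ → X}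
    (hu : ∀ n, u n ∈ K n) : Tendsto u atTop (𝓝 p) := by
  refine tendsto_nhds.2 fun U hU hpU => ?_
  obtain ⟨N, hN⟩ := exists_subset_nhds_of_isCompact'
    (directed_of_isDirected_le fun _ _ h => hanti h) hcpt hclosed
    fun x hx => (hsub hx : x = p) ▸ hU.mem_nhds hpU
  exact (eventually_ge_atTop N).mono fun n hn => hN (hanti hn (hu n))

theorem Filter.Tendsto.eventually_pos_of_nonneg {α R : Type*} [TopologicalSpace R] [LinearOrder R]
    [OrderClosedTopology R] [Zero R] {l : Filter α} [l.NeBot] {f : α → R} {a : R}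
    (hf : Tendsto f l (𝓝 a)) (ha : a ≠ 0) (hnonneg : ∀ᶠ x in l, 0 ≤ f x) :
    ∀ᶠ x in l, 0 < f x :=
  hf.eventually (eventually_gt_nhds ((ge_of_tendsto hf hnonneg).lt_of_ne' ha))

section

variable {ι : Type*} [Fintype ι]

theorem intCast_dotProduct_ne_zero {v : ι → ℝ} (hv : LinearIndependent ℚ v) {w : ι → ℤ}
    (hw : w ≠ 0) : (fun i => (w i : ℝ)) ⬝ᵥ v ≠ 0 := by
  intro h
  refine hw (funext fun i => ?_)
  have := Fintype.linearIndependent_iff.1 hv (fun i => (w i : ℚ))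
    (by simpa [dotProduct, Rat.smul_def] using h) i
  exact_mod_cast this

theorem inv_sum_smul_mem_stdSimplex {x : ι → ℝ} (hx : 0 ≤ x) (hsum : 0 < ∑ i, x i) :
    (∑ i, x i)⁻¹ • x ∈ stdSimplex ℝ ι :=
  ⟨fun i => mul_nonneg (inv_nonneg.2 hsum.le) (hx i), by
    simp only [Pi.smul_apply, smul_eq_mul, ← Finset.mul_sum, inv_mul_cancel₀ hsum.ne']⟩

theorem tendsto_of_mem_inter_stdSimplex {C : ℕ → Set (ι → ℝ)} (hanti : Antitone C)
    (hclosed : ∀ n, IsClosed (C n)) {v : ι → ℝ}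
    (hray : ⋂ n, C n = {w | ∃ t : ℝ, 0 ≤ t ∧ w = t • v}) {u : ℕ → ι → ℝ}
    (hu : ∀ n, u n ∈ C n ∩ stdSimplex ℝ ι) :
    Tendsto u atTop (𝓝 ((∑ i, v i)⁻¹ • v)) := by
  refine tendsto_of_mem_of_iInter_subset_singleton
    (fun _ _ h => Set.inter_subset_inter_left _ (hanti h))
    (fun n => (isCompact_stdSimplex ℝ ι).inter_left (hclosed n))
    (fun n => (hclosed n).inter (isClosed_stdSimplex ℝ ι)) ?_ hu
  rintro x hx
  rw [← Set.iInter_inter, hray] at hx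
  obtain ⟨⟨t, -, rfl⟩, -, hsum⟩ := hx
  simp only [Pi.smul_apply, smul_eq_mul, ← Finset.mul_sum] at hsum
  rw [Set.mem_singleton_iff, eq_inv_of_mul_eq_one_left hsum]

namespace Matrix

theorem mulVec_nonneg {R : Type*} [Semiring R] [PartialOrder R] [IsOrderedRing R]
    {A : Matrix ι ι R} (hA : ∀ i j, 0 ≤ A i j) {x : ι → R} (hx : 0 ≤ x) : 0 ≤ A *ᵥ x :=
  fun i => Finset.sum_nonneg fun j _ => mul_nonneg (hA i j) (hx j)

theorem image_mul_mulVec_Ici_subset {R : Type*} [CommSemiring R] [PartialOrder R]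
    [IsOrderedRing R] (A : Matrix ι ι R) {B : Matrix ι ι R} (hB : ∀ i j, 0 ≤ B i j) :
    ((A * B) *ᵥ ·) '' Set.Ici 0 ⊆ (A *ᵥ ·) '' Set.Ici 0 := by
  rintro _ ⟨z, hz, rfl⟩
  exact ⟨B *ᵥ z, mulVec_nonneg hB hz, mulVec_mulVec z A B⟩

variable [DecidableEq ι]

theorem isClosed_image_mulVec {R : Type*} [CommRing R] [TopologicalSpace R] [IsTopologicalRing R]
    {A : Matrix ι ι R} (hA : IsUnit A.det) {S : Set (ι → R)} (hS : IsClosed S) :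
    IsClosed ((A *ᵥ ·) '' S) := by
  rw [Set.image_eq_preimage_of_inverse (g := (A⁻¹ *ᵥ ·))
    (fun x => by simp [mulVec_mulVec, nonsing_inv_mul A hA])
    (fun x => by simp [mulVec_mulVec, mul_nonsing_inv A hA])]
  exact hS.preimage (continuous_const.matrix_mulVec continuous_id)

theorem sum_col_pos_of_nonneg {A : Matrix ι ι ℤ} (hA : ∀ i j, 0 ≤ A i j) (hdet : IsUnit A.det)
    (j : ι) : 0 < ∑ i, A i j := by
  refine (Finset.sum_nonneg fun i _ => hA i j).lt_of_ne fun h => ?_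
  have hcol := (Finset.sum_eq_zero_iff_of_nonneg fun i _ => hA i j).1 h.symm
  exact not_isUnit_zero
    (det_eq_zero_of_column_eq_zero j (fun i => hcol i (Finset.mem_univ i)) ▸ hdet)

theorem row_ne_zero_of_isUnit_det {R : Type*} [CommRing R] [Nontrivial R] {A : Matrix ι ι R}
    (hdet : IsUnit A.det) (i : ι) : A i ≠ 0 := fun h =>
  not_isUnit_zero (det_eq_zero_of_row_eq_zero i (congrFun h) ▸ hdet)

end Matrix

end

section prodM

variable {d : ℕ} {M : ℕ → Matrix (Fin (d + 1)) (Fin (d + 1)) ℤ}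

theorem prodM_mul {a b c : ℕ} (hab : a ≤ b)
    (hbc : b ≤ c) : prodM M a c = prodM M a b * prodM M b c := by
  have h := List.range'_append_1 (s := a) (m := b - a) (n := c - b)
  rw [Nat.add_sub_cancel' hab, show b - a + (c - b) = c - a by omega] at h
  rw [prodM, prodM, prodM, ← List.prod_append, ← List.map_append, h]

theorem prodM_nonneg (hpos : ∀ n i j, 0 ≤ M n i j) (k n : ℕ) (i j : Fin (d + 1)) :
    0 ≤ prodM M k n i j :=
  List.prod_induction (fun A : Matrix (Fin (d + 1)) (Fin (d + 1)) ℤ => ∀ i j, 0 ≤ A i j)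
    (fun A B hA hB i j => by
      rw [mul_apply]; exact Finset.sum_nonneg fun l _ => mul_nonneg (hA i l) (hB l j))
    (fun i j => by rw [one_apply]; split_ifs <;> norm_num)
    (List.forall_mem_map.2 fun n _ => hpos n) i j

theorem isUnit_det_prodM (hunit : ∀ n, IsUnit (M n).det) (k n : ℕ) :
    IsUnit (prodM M k n).det :=
  List.prod_induction (fun A : Matrix (Fin (d + 1)) (Fin (d + 1)) ℤ => IsUnit A.det)
    (fun A B hA hB => by rw [det_mul]; exact hA.mul hB) (by simp)
    (List.forall_mem_map.2 fun n _ => hunit n)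

end prodM

section limit

variable {d : ℕ} {M : ℕ → Matrix (Fin (d + 1)) (Fin (d + 1)) ℤ}

theorem tendsto_normalized_col_prodM (hpos : ∀ n i j, 0 ≤ M n i j)
    (hunit : ∀ n, IsUnit (M n).det) {v : Fin (d + 1) → ℝ}
    (hcone : (⋂ n : ℕ, (fun z => ((prodM M 0 n).map (Int.cast : ℤ → ℝ)).mulVec z) ''
        {z : Fin (d + 1) → ℝ | ∀ i, 0 ≤ z i}) = {w | ∃ t : ℝ, 0 ≤ t ∧ w = t • v})
    (j : Fin (d + 1)) :
    Tendsto (fun n => (∑ i, (prodM M 0 n i j : ℝ))⁻¹ • fun i => (prodM M 0 n i j : ℝ)) atTop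
      (𝓝 ((∑ i, v i)⁻¹ • v)) := by
  set P : ℕ → Matrix (Fin (d + 1)) (Fin (d + 1)) ℝ :=
    fun n => (prodM M 0 n).map (Int.cast : ℤ → ℝ)
  have hnonneg : ∀ m n i j, 0 ≤ ((prodM M m n).map (Int.cast : ℤ → ℝ)) i j :=
    fun m n i j => Int.cast_nonneg (prodM_nonneg hpos m n i j)
  have hsum : ∀ n, 0 < ∑ i, P n i j := fun n => by
    simp only [P, map_apply]
    exact_mod_cast sum_col_pos_of_nonneg (prodM_nonneg hpos 0 n) (isUnit_det_prodM hunit 0 n) j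
  refine tendsto_of_mem_inter_stdSimplex (C := fun n => (P n *ᵥ ·) '' Set.Ici 0)
    (fun m n hmn => ?_) (fun n => isClosed_image_mulVec ?_ isClosed_Ici) hcone
    fun n => ⟨?_, inv_sum_smul_mem_stdSimplex (fun i => hnonneg 0 n i j) (hsum n)⟩
  · have hsplit : P n = P m * (prodM M m n).map (Int.cast : ℤ → ℝ) := by
      simp only [P]
      rw [prodM_mul (Nat.zero_le m) hmn]
      exact Matrix.map_mul (f := Int.castRingHom ℝ)
    simpa only [hsplit] using image_mul_mulVec_Ici_subset (P m) (hnonneg m n)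
  · rw [← Int.cast_det]
    exact (isUnit_det_prodM hunit 0 n).map (Int.castRingHom ℝ)
  · refine ⟨(∑ i, P n i j)⁻¹ • Pi.single j 1, ?_, ?_⟩
    · exact smul_nonneg (inv_nonneg.2 (hsum n).le)
        (Pi.single_nonneg.2 zero_le_one : (0 : Fin (d + 1) → ℝ) ≤ Pi.single j 1)
    · simp only [mulVec_smul, mulVec_single_one]
      rfl

theorem eventually_prodM_pos (hpos : ∀ n i j, 0 ≤ M n i j) (hunit : ∀ n, IsUnit (M n).det)
    {v : Fin (d + 1) → ℝ} (hirr : LinearIndependent ℚ v) (k : ℕ) (i j : Fin (d + 1))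
    (hcol : Tendsto (fun n => (∑ l, (prodM M 0 n l j : ℝ))⁻¹ • fun l => (prodM M 0 n l j : ℝ))
      atTop (𝓝 ((∑ l, v l)⁻¹ • v))) :
    ∀ᶠ n in atTop, 0 < prodM M k n i j := by
  have hk := isUnit_det_prodM hunit 0 k
  set b : Fin (d + 1) → ℝ := fun l => ((prodM M 0 k)⁻¹ i l : ℝ)
  set s : ℕ → ℝ := fun n => ∑ l, (prodM M 0 n l j : ℝ)
  have hs : ∀ n, 0 ≤ s n := fun n =>
    Finset.sum_nonneg fun l _ => Int.cast_nonneg (prodM_nonneg hpos 0 n l j)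
  have hentry : ∀ n, k ≤ n →
      b ⬝ᵥ ((s n)⁻¹ • fun l => (prodM M 0 n l j : ℝ)) = (s n)⁻¹ * prodM M k n i j := by
    intro n hn
    have hsplit : prodM M k n = (prodM M 0 k)⁻¹ * prodM M 0 n := by
      rw [prodM_mul (Nat.zero_le k) hn, ← Matrix.mul_assoc, nonsing_inv_mul _ hk, Matrix.one_mul]
    rw [dotProduct_smul, smul_eq_mul, hsplit, mul_apply]
    push_cast
    rfl
  have hlim : b ⬝ᵥ ((∑ l, v l)⁻¹ • v) ≠ 0 := by
    have hsum : ∑ l, v l ≠ 0 := by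
      simpa [dotProduct] using intCast_dotProduct_ne_zero hirr (w := 1) one_ne_zero
    rw [dotProduct_smul, smul_eq_mul]
    exact mul_ne_zero (inv_ne_zero hsum) (intCast_dotProduct_ne_zero hirr
      (row_ne_zero_of_isUnit_det (isUnit_nonsing_inv_det _ hk) i))
  have htendsto : Tendsto (fun n => b ⬝ᵥ ((s n)⁻¹ • fun l => (prodM M 0 n l j : ℝ))) atTop
      (𝓝 (b ⬝ᵥ ((∑ l, v l)⁻¹ • v))) :=
    ((continuous_const.dotProduct continuous_id).tendsto _).comp hcol
  have hnonneg : ∀ᶠ n in atTop, 0 ≤ b ⬝ᵥ ((s n)⁻¹ • fun l => (prodM M 0 n l j : ℝ)) := by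
    filter_upwards [eventually_ge_atTop k] with n hn
    rw [hentry n hn]
    exact mul_nonneg (inv_nonneg.2 (hs n)) (Int.cast_nonneg (prodM_nonneg hpos k n i j))
  filter_upwards [htendsto.eventually_pos_of_nonneg hlim hnonneg, eventually_ge_atTop k]
    with n hn hkn
  rw [hentry n hkn] at hn
  exact_mod_cast pos_of_mul_pos_right hn (inv_nonneg.2 (hs n))

end limit

theorem primitivity_of_irrational_limit_ray_general {d : ℕ}
    (M : ℕ → Matrix (Fin (d + 1)) (Fin (d + 1)) ℤ)
    (hpos : ∀ n i j, 0 ≤ M n i j)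
    (hdet : ∀ n, (M n).det = 1 ∨ (M n).det = -1)
    (v : Fin (d + 1) → ℝ)
    (hirr : LinearIndependent ℚ v)
    (hcone : (⋂ n : ℕ, (fun z => ((prodM M 0 n).map (Int.cast : ℤ → ℝ)).mulVec z) ''
        {z : Fin (d + 1) → ℝ | ∀ i, 0 ≤ z i}) = {w | ∃ t : ℝ, 0 ≤ t ∧ w = t • v}) :
    ∀ k : ℕ, ∃ n : ℕ, k ≤ n ∧ ∀ i j, 0 < prodM M k n i j := by
  intro k
  have hunit : ∀ n, IsUnit (M n).det := fun n => Int.isUnit_iff.2 (hdet n)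
  have hentry : ∀ i j, ∀ᶠ n in atTop, 0 < prodM M k n i j := fun i j =>
    eventually_prodM_pos hpos hunit hirr k i j (tendsto_normalized_col_prodM hpos hunit hcone j)
  obtain ⟨n, hkn, hn⟩ := ((eventually_ge_atTop k).and
    (eventually_all.2 fun i => eventually_all.2 (hentry i))).exists
  exact ⟨n, hkn, hn⟩

/-- If the nested images of the positive orthant under the products `M_{[0,n)}` of
nonnegative unimodular integer matrices intersect in the ray spanned by a totally
irrational nonnegative vector `v`, then the sequence of matrices is primitive. -/
theorem primitivity_of_irrational_limit_ray {d : ℕ} (hd : 1 ≤ d)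
    (M : ℕ → Matrix (Fin (d + 1)) (Fin (d + 1)) ℤ)
    (hpos : ∀ n i j, 0 ≤ M n i j)
    (hdet : ∀ n, (M n).det = 1 ∨ (M n).det = -1)
    (v : Fin (d + 1) → ℝ) (hv : ∀ i, 0 ≤ v i)
    (hirr : LinearIndependent ℚ v)
    (hcone : (⋂ n : ℕ, (fun z => ((prodM M 0 n).map (Int.cast : ℤ → ℝ)).mulVec z) ''
        {z : Fin (d + 1) → ℝ | ∀ i, 0 ≤ z i}) = {w | ∃ t : ℝ, 0 ≤ t ∧ w = t • v}) :
    ∀ k : ℕ, ∃ n : ℕ, k ≤ n ∧ ∀ i j, 0 < prodM M k n i j :=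
  primitivity_of_irrational_limit_ray_general M hpos hdet v hirr hcone
end

section
/- Let (M_n)_{n∈ℕ} be invertible (d+1)×(d+1) real matrices and let v ∈ ℝ^{d+1} with h(v) ≠ 0 be such that h(M_{[0,k)}^{-1} v) ≠ 0 for every k. Then for every k ∈ ℕ, limsup_{n→∞} (1/n)·ln ‖π_v M_{[0,n)}‖₁ = limsup_{n→∞} (1/n)·ln ‖π_{y_k} M_{[k,k+n)}‖₁, where y_k = M_{[0,k)}^{-1} v. In particular, if this limsup is negative, then for every k there exist C > 0 and n₀ such that ‖π_{y_k} M_{[k,k+n)}‖₁ ≤ e^{−nC} for all n ≥ n₀. -/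
/-!
Write `A = M_{[0,k)}` and `y = A⁻¹ v`. Whenever `B y = w` with `h(w) ≠ 0`, the projection
identity `π_w B π_y = π_w B` holds, so
`π_v M_{[0,k+n)} = (π_v A) (π_y M_{[k,k+n)})` and `π_y M_{[k,k+n)} = (π_y A⁻¹) (π_v M_{[0,k+n)})`.
Since `‖·‖₁` is the operator norm of `ℓ¹`, it is submultiplicative, so the two sequences of
log-norms differ by at most a constant after an index shift by `k`; neither changes
`limsup (1/n) log`. Because `d ≥ 1`, none of these operators vanishes, which keeps `Real.log`
away from its junk value at `0`.
-/

/-- `prodMR M k n = M_k * M_{k+1} * ⋯ * M_{n-1}` (the identity when `n ≤ k`). -/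
def prodMR {d : ℕ} (M : ℕ → Matrix (Fin (d + 1)) (Fin (d + 1)) ℝ) (k n : ℕ) :
    Matrix (Fin (d + 1)) (Fin (d + 1)) ℝ :=
  ((List.range' k (n - k)).map M).prod

/-- The projection `π_y : z ↦ z - (h(z)/h(y)) • y` onto `P = {h = 0}`, as a linear map. -/
noncomputable def projL {d : ℕ} (y : Fin (d + 1) → ℝ) :
    (Fin (d + 1) → ℝ) →ₗ[ℝ] (Fin (d + 1) → ℝ) :=
  LinearMap.id - (∑ i, y i)⁻¹ •
    LinearMap.smulRight (∑ i, LinearMap.proj i : (Fin (d + 1) → ℝ) →ₗ[ℝ] ℝ) y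

/-- The operator norm induced by the norm `‖z‖₁ = ∑ i, |z i|`. -/
noncomputable def opNorm1 {d : ℕ} (f : (Fin (d + 1) → ℝ) →ₗ[ℝ] (Fin (d + 1) → ℝ)) : ℝ :=
  sSup {c : ℝ | ∃ z : Fin (d + 1) → ℝ, z ≠ 0 ∧ c = (∑ i, |f z i|) / (∑ i, |z i|)}

open Filter Topology

section

variable {d : ℕ}

noncomputable def toL1 (f : (Fin (d + 1) → ℝ) →ₗ[ℝ] (Fin (d + 1) → ℝ)) :
    WithLp 1 (Fin (d + 1) → ℝ) →L[ℝ] WithLp 1 (Fin (d + 1) → ℝ) :=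
  LinearMap.toContinuousLinearMap <| (WithLp.linearEquiv 1 ℝ _).symm.toLinearMap ∘ₗ f ∘ₗ
    (WithLp.linearEquiv 1 ℝ _).toLinearMap

theorem toL1_toLp (f : (Fin (d + 1) → ℝ) →ₗ[ℝ] (Fin (d + 1) → ℝ)) (z : Fin (d + 1) → ℝ) :
    toL1 f (WithLp.toLp 1 z) = WithLp.toLp 1 (f z) := rfl

theorem toL1_comp (f g : (Fin (d + 1) → ℝ) →ₗ[ℝ] (Fin (d + 1) → ℝ)) :
    toL1 (f ∘ₗ g) = (toL1 f).comp (toL1 g) := rfl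

theorem toL1_ne_zero {f : (Fin (d + 1) → ℝ) →ₗ[ℝ] (Fin (d + 1) → ℝ)} (hf : f ≠ 0) :
    toL1 f ≠ 0 := by
  contrapose! hf
  exact LinearMap.ext fun z => congr(($hf (WithLp.toLp 1 z)).ofLp)

theorem norm_toLp_one (z : Fin (d + 1) → ℝ) : ‖WithLp.toLp 1 z‖ = ∑ i, |z i| := by
  simp [PiLp.norm_eq_of_L1]

theorem opNorm1_eq_norm_toL1 (f : (Fin (d + 1) → ℝ) →ₗ[ℝ] (Fin (d + 1) → ℝ)) :
    opNorm1 f = ‖toL1 f‖ := by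
  have hratio (z : Fin (d + 1) → ℝ) : (∑ i, |f z i|) / (∑ i, |z i|) ≤ ‖toL1 f‖ := by
    simpa only [toL1_toLp, norm_toLp_one] using (toL1 f).ratio_le_opNorm (WithLp.toLp 1 z)
  have hbdd : BddAbove {c : ℝ | ∃ z : Fin (d + 1) → ℝ, z ≠ 0 ∧
      c = (∑ i, |f z i|) / (∑ i, |z i|)} := ⟨_, by rintro c ⟨z, -, rfl⟩; exact hratio z⟩
  refine le_antisymm (csSup_le ⟨_, Pi.single 0 1, Function.ne_iff.mpr ⟨0, by simp⟩, rfl⟩ ?_) ?_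
  · rintro c ⟨z, -, rfl⟩
    exact hratio z
  · refine (toL1 f).opNorm_le_bound (Real.sSup_nonneg (by rintro c ⟨z, -, rfl⟩; positivity))
      fun z => ?_
    obtain ⟨z, rfl⟩ := (WithLp.equiv 1 _).symm.surjective z
    rcases eq_or_ne z 0 with rfl | hz
    · simp
    · have hpos : 0 < ∑ i, |z i| := norm_toLp_one z ▸ norm_pos_iff.mpr (by simpa using hz)
      have hle : (∑ i, |f z i|) / (∑ i, |z i|) ≤ opNorm1 f := le_csSup hbdd ⟨z, hz, rfl⟩
      rw [div_le_iff₀ hpos] at hle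
      simpa only [WithLp.equiv_symm_apply, toL1_toLp, norm_toLp_one] using hle

theorem log_opNorm1_comp_le {f g : (Fin (d + 1) → ℝ) →ₗ[ℝ] (Fin (d + 1) → ℝ)}
    (hfg : f ∘ₗ g ≠ 0) :
    Real.log (opNorm1 (f ∘ₗ g)) ≤ Real.log (opNorm1 f) + Real.log (opNorm1 g) := by
  have hf : f ≠ 0 := by rintro rfl; exact hfg (LinearMap.zero_comp g)
  have hg : g ≠ 0 := by rintro rfl; exact hfg (LinearMap.comp_zero f)
  simp only [opNorm1_eq_norm_toL1, toL1_comp] at hfg ⊢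
  rw [← Real.log_mul (norm_ne_zero_iff.mpr (toL1_ne_zero hf))
    (norm_ne_zero_iff.mpr (toL1_ne_zero hg))]
  exact Real.log_le_log (norm_pos_iff.mpr (toL1_ne_zero hfg)) ((toL1 f).opNorm_comp_le _)

theorem projL_apply (y z : Fin (d + 1) → ℝ) :
    projL y z = z - ((∑ i, y i)⁻¹ * ∑ i, z i) • y := by
  simp [projL, smul_smul]

theorem projL_self {y : Fin (d + 1) → ℝ} (hy : ∑ i, y i ≠ 0) : projL y y = 0 := by
  rw [projL_apply, inv_mul_cancel₀ hy, one_smul, sub_self]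

theorem projL_map_projL (A : (Fin (d + 1) → ℝ) →ₗ[ℝ] (Fin (d + 1) → ℝ))
    {y w : Fin (d + 1) → ℝ} (hA : A y = w) (hw : ∑ i, w i ≠ 0) (z : Fin (d + 1) → ℝ) :
    projL w (A (projL y z)) = projL w (A z) := by
  rw [projL_apply y z, map_sub, map_smul, hA, map_sub, map_smul, projL_self hw, smul_zero,
    sub_zero]

theorem projL_ne_zero (hd : 1 ≤ d) (y : Fin (d + 1) → ℝ) : projL y ≠ 0 := by
  have h0 : (0 : Fin (d + 1)) ≠ Fin.last d := by
    rw [Ne, Fin.ext_iff, Fin.val_zero, Fin.val_last]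
    omega
  set z : Fin (d + 1) → ℝ := Pi.single 0 1 - Pi.single (Fin.last d) 1
  have hz : projL y z = z := by simp [projL_apply, z, Finset.sum_sub_distrib]
  intro h
  simpa [z, h0] using congr_fun (hz.symm.trans (LinearMap.congr_fun h z)) 0

theorem projL_comp_mulVecLin_ne_zero (hd : 1 ≤ d) (y : Fin (d + 1) → ℝ)
    {P : Matrix (Fin (d + 1)) (Fin (d + 1)) ℝ} (hP : IsUnit P) :
    projL y ∘ₗ P.mulVecLin ≠ 0 := by
  refine fun h => projL_ne_zero hd y (LinearMap.ext fun z => ?_)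
  obtain ⟨x, rfl⟩ := Matrix.mulVec_surjective_iff_isUnit.mpr hP z
  exact LinearMap.congr_fun h x

theorem isUnit_prodMR {M : ℕ → Matrix (Fin (d + 1)) (Fin (d + 1)) ℝ} (hM : ∀ n, IsUnit (M n))
    (k n : ℕ) : IsUnit (prodMR M k n) :=
  List.prod_isUnit fun A hA => by
    obtain ⟨m, -, rfl⟩ := List.mem_map.mp hA
    exact hM m

theorem prodMR_mul_prodMR (M : ℕ → Matrix (Fin (d + 1)) (Fin (d + 1)) ℝ) {i j l : ℕ}
    (hij : i ≤ j) (hjl : j ≤ l) : prodMR M i j * prodMR M j l = prodMR M i l := by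
  obtain ⟨a, rfl⟩ := Nat.exists_eq_add_of_le hij
  obtain ⟨b, rfl⟩ := Nat.exists_eq_add_of_le hjl
  rw [prodMR, prodMR, prodMR, ← List.prod_append, ← List.map_append, Nat.add_sub_cancel_left,
    Nat.add_sub_cancel_left, Nat.add_assoc, Nat.add_sub_cancel_left, List.range'_append_1]

noncomputable def growthRate (u : ℕ → ℝ) : EReal :=
  limsup (fun n : ℕ => (((n : ℝ)⁻¹ * u n : ℝ) : EReal)) atTop

theorem eventually_lt_mul_of_growthRate_lt {u : ℕ → ℝ} {c : ℝ} (h : growthRate u < c) :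
    ∀ᶠ n : ℕ in atTop, u n < n * c := by
  filter_upwards [eventually_lt_of_limsup_lt h, eventually_gt_atTop 0] with n hn hpos
  rwa [EReal.coe_lt_coe_iff, inv_mul_lt_iff₀ (by positivity)] at hn

theorem growthRate_le_of_eventually_le_add {u w : ℕ → ℝ} (j k : ℕ) (D : ℝ)
    (h : ∀ᶠ n in atTop, w (n + j) ≤ D + u (n + k)) : growthRate w ≤ growthRate u := by
  refine EReal.le_of_forall_lt_iff_le.mp fun c hc => ?_
  have hu := (tendsto_add_atTop_nat k).eventually (eventually_lt_mul_of_growthRate_lt hc)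
  have hlim : Tendsto (fun n : ℕ => ((n + j : ℕ) : ℝ)⁻¹ * (D + (n + k : ℕ) * c)) atTop (𝓝 c) := by
    have h0 := ((tendsto_const_div_atTop_nhds_zero_nat (D + (k - j : ℝ) * c)).comp
      (tendsto_add_atTop_nat j)).add_const c
    rw [zero_add] at h0
    refine h0.congr' ((eventually_gt_atTop 0).mono fun n hn => ?_)
    simp only [Function.comp_apply]
    have : ((n + j : ℕ) : ℝ) ≠ 0 := by positivity
    field_simp
    push_cast
    ring
  rw [growthRate, ← limsup_nat_add _ j, ← (EReal.tendsto_coe.mpr hlim).limsup_eq]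
  refine limsup_le_limsup ?_
  filter_upwards [h, hu] with n hw hu
  exact EReal.coe_le_coe_iff.mpr
    (mul_le_mul_of_nonneg_left (hw.trans (by linarith)) (by positivity))

theorem exists_pos_le_exp_of_growthRate_log_neg {u : ℕ → ℝ}
    (h : growthRate (fun n => Real.log (u n)) < 0) :
    ∃ C : ℝ, 0 < C ∧ ∃ n₀ : ℕ, ∀ n ≥ n₀, u n ≤ Real.exp (-(n * C)) := by
  obtain ⟨c, hc, hc0⟩ := EReal.exists_between_coe_real h
  refine ⟨-c, neg_pos.mpr (EReal.coe_lt_coe_iff.mp hc0), eventually_atTop.mp ?_⟩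
  filter_upwards [eventually_lt_mul_of_growthRate_lt hc] with n hn
  rw [mul_neg, neg_neg]
  exact (Real.le_exp_log _).trans (Real.exp_le_exp.mpr hn.le)

theorem growthRate_log_opNorm1_shift (hd : 1 ≤ d) {M : ℕ → Matrix (Fin (d + 1)) (Fin (d + 1)) ℝ}
    (hM : ∀ n, IsUnit (M n)) {v : Fin (d + 1) → ℝ} (hv : ∑ i, v i ≠ 0) {k : ℕ}
    (hy : ∑ i, ((prodMR M 0 k)⁻¹.mulVec v) i ≠ 0) :
    growthRate (fun n => Real.log (opNorm1 (projL v ∘ₗ (prodMR M 0 n).mulVecLin))) =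
      growthRate (fun n => Real.log (opNorm1 (projL ((prodMR M 0 k)⁻¹.mulVec v) ∘ₗ
        (prodMR M k (k + n)).mulVecLin))) := by
  set A := prodMR M 0 k
  set y := A⁻¹.mulVec v
  have hA : IsUnit A.det := A.isUnit_iff_isUnit_det.mp (isUnit_prodMR hM 0 k)
  have hAy : A.mulVecLin y = v := by
    simp [y, Matrix.mulVec_mulVec, Matrix.mul_nonsing_inv _ hA]
  have hprod (n : ℕ) : A * prodMR M k (k + n) = prodMR M 0 (n + k) := by
    rw [prodMR_mul_prodMR M k.zero_le (Nat.le_add_right k n), Nat.add_comm k n]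
  have hF (n : ℕ) : projL v ∘ₗ (prodMR M 0 (n + k)).mulVecLin =
      (projL v ∘ₗ A.mulVecLin) ∘ₗ (projL y ∘ₗ (prodMR M k (k + n)).mulVecLin) := by
    refine LinearMap.ext fun z => ?_
    simp only [LinearMap.comp_apply, ← hprod, Matrix.mulVecLin_mul]
    exact (projL_map_projL _ hAy hv _).symm
  have hG (n : ℕ) : projL y ∘ₗ (prodMR M k (k + n)).mulVecLin =
      (projL y ∘ₗ A⁻¹.mulVecLin) ∘ₗ (projL v ∘ₗ (prodMR M 0 (n + k)).mulVecLin) := by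
    refine LinearMap.ext fun z => ?_
    simp only [LinearMap.comp_apply]
    rw [projL_map_projL A⁻¹.mulVecLin (w := y) rfl hy, ← hprod]
    simp only [Matrix.mulVecLin_apply, Matrix.mulVec_mulVec,
      Matrix.nonsing_inv_mul_cancel_left _ _ hA]
  apply le_antisymm
  · refine growthRate_le_of_eventually_le_add k 0 (Real.log (opNorm1 (projL v ∘ₗ A.mulVecLin)))
      (Eventually.of_forall fun n => ?_)
    have hne := projL_comp_mulVecLin_ne_zero hd v (isUnit_prodMR hM 0 (n + k))
    rw [hF n] at hne ⊢
    exact log_opNorm1_comp_le hne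
  · refine growthRate_le_of_eventually_le_add 0 k (Real.log (opNorm1 (projL y ∘ₗ A⁻¹.mulVecLin)))
      (Eventually.of_forall fun n => ?_)
    have hne := projL_comp_mulVecLin_ne_zero hd y (isUnit_prodMR hM k (k + n))
    rw [hG n] at hne
    simpa only [Nat.add_zero, hG n] using log_opNorm1_comp_le hne

end

/-- The exponential convergence rate `limsup (1/n) ln ‖π_v M_{[0,n)}‖₁` is invariant
under shifting the sequence of matrices (with `y_k = M_{[0,k)}⁻¹ v`); in particular, if
it is negative then each shifted sequence decays exponentially. -/
theorem limsup_shift_invariance {d : ℕ} (hd : 1 ≤ d)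
    (M : ℕ → Matrix (Fin (d + 1)) (Fin (d + 1)) ℝ)
    (hinv : ∀ n, IsUnit (M n).det)
    (v : Fin (d + 1) → ℝ) (hv : (∑ i, v i) ≠ 0)
    (hy : ∀ k : ℕ, (∑ i, ((prodMR M 0 k)⁻¹.mulVec v) i) ≠ 0) :
    (∀ k : ℕ,
      Filter.limsup (fun n : ℕ =>
          (((n : ℝ)⁻¹ * Real.log (opNorm1 (projL v ∘ₗ (prodMR M 0 n).mulVecLin)) : ℝ) :
            EReal)) Filter.atTop =
        Filter.limsup (fun n : ℕ =>
          (((n : ℝ)⁻¹ * Real.log (opNorm1 (projL ((prodMR M 0 k)⁻¹.mulVec v) ∘ₗ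
              (prodMR M k (k + n)).mulVecLin)) : ℝ) : EReal)) Filter.atTop) ∧
    (Filter.limsup (fun n : ℕ =>
        (((n : ℝ)⁻¹ * Real.log (opNorm1 (projL v ∘ₗ (prodMR M 0 n).mulVecLin)) : ℝ) :
          EReal)) Filter.atTop < 0 →
      ∀ k : ℕ, ∃ C : ℝ, 0 < C ∧ ∃ n₀ : ℕ, ∀ n ≥ n₀,
        opNorm1 (projL ((prodMR M 0 k)⁻¹.mulVec v) ∘ₗ (prodMR M k (k + n)).mulVecLin) ≤
          Real.exp (-(n * C))) := by
  have hM : ∀ n, IsUnit (M n) := fun n => (M n).isUnit_iff_isUnit_det.mpr (hinv n)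
  have hshift := fun k => growthRate_log_opNorm1_shift hd hM hv (hy k)
  exact ⟨hshift, fun hneg k =>
    exists_pos_le_exp_of_growthRate_log_neg ((hshift k).symm.trans_lt hneg)⟩
end

section
/- Let M be an invertible (d+1)×(d+1) real matrix and let v′ ∈ ℝ^{d+1} with h(v′) = 1 and h(Mv′) ≠ 0; set v = Mv′ / h(Mv′). Then there is a well-defined linear endomorphism N of the d-dimensional hyperplane P determined by N(π_{v′}(z)) = π_v(Mz) for all z ∈ ℝ^{d+1}, and its determinant (as an endomorphism of P) satisfies det(N) = det(M) / h(Mv′). -/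
/-!
`N` is the restriction to `P = ker h` of `S z = M z + (h z - h (M z)) • v`. Since `h v = 1`,
`S` preserves `h`, so it acts trivially on `ℝ^{d+1} ⧸ P` and `det N = det S`. Moreover
`S = M ∘ (z ↦ z + (h z - h (M z)) • v' / h(Mv'))`, and the second factor has determinant
`1 + (1 - h(Mv')) / h(Mv') = 1 / h(Mv')`.
-/

/-- The hyperplane `P = {z ∈ ℝ^{d+1} | h(z) = 0}` as a submodule of `ℝ^{d+1}`. -/
noncomputable def PSub (d : ℕ) : Submodule ℝ (Fin (d + 1) → ℝ) :=
  LinearMap.ker (∑ i, LinearMap.proj i : (Fin (d + 1) → ℝ) →ₗ[ℝ] ℝ)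

open Module LinearMap

theorem LinearMap.det_restrict_eq_det_of_sub_mem {K V : Type*} [Field K] [AddCommGroup V]
    [Module K V] [FiniteDimensional K V] {W : Submodule K V} {S : V →ₗ[K] V}
    (hW : W ≤ W.comap S) (hS : ∀ x, S x - x ∈ W) :
    (S.restrict hW).det = S.det := by
  have hQ : W.mapQ W S hW = LinearMap.id := by
    refine Submodule.linearMap_qext W (LinearMap.ext fun x => ?_)
    exact (Submodule.Quotient.eq W).mpr (hS x)
  rw [S.det_eq_det_mul_det W hW, hQ, LinearMap.det_id, mul_one]

section Extension

variable {K V : Type*} [Field K] [AddCommGroup V] [Module K V]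

/-- `z ↦ A z + (h z - h (A z)) • v` with `v = A v' / h (A v')`. It preserves `h`, and for
`h v' = 1` it agrees with `π_v ∘ A` on `ker h`. -/
noncomputable def extendedEnd (h : Dual K V) (A : V →ₗ[K] V) (v' : V) : V →ₗ[K] V :=
  A ∘ₗ transvection (h - h ∘ₗ A) ((h (A v'))⁻¹ • v')

variable (h : Dual K V) (A : V →ₗ[K] V) {v' : V}

theorem extendedEnd_apply (z : V) :
    extendedEnd h A v' z = A z + (h z - h (A z)) • (h (A v'))⁻¹ • A v' := by
  simp [extendedEnd, transvection.apply]

theorem apply_extendedEnd (hc : h (A v') ≠ 0) (z : V) : h (extendedEnd h A v' z) = h z := by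
  rw [extendedEnd_apply, map_add, map_smul, map_smul, smul_eq_mul, smul_eq_mul,
    inv_mul_cancel₀ hc, mul_one, add_sub_cancel]

theorem extendedEnd_sub_smul (hv' : h v' = 1) (hc : h (A v') ≠ 0) (z : V) :
    extendedEnd h A v' (z - h z • v') = A z - h (A z) • (h (A v'))⁻¹ • A v' := by
  simp only [extendedEnd_apply, map_sub, map_smul, hv', smul_smul]
  match_scalars
  · rfl
  · linear_combination h z * mul_inv_cancel₀ hc

theorem sub_mem_ker_extendedEnd (hc : h (A v') ≠ 0) (z : V) :
    extendedEnd h A v' z - z ∈ ker h := by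
  rw [mem_ker, map_sub, apply_extendedEnd h A hc, sub_self]

theorem ker_le_comap_extendedEnd (hc : h (A v') ≠ 0) :
    ker h ≤ (ker h).comap (extendedEnd h A v') :=
  fun z hz => by simpa using (ker h).add_mem (sub_mem_ker_extendedEnd h A hc z) hz

theorem det_extendedEnd [FiniteDimensional K V] (hv' : h v' = 1) (hc : h (A v') ≠ 0) :
    (extendedEnd h A v').det = A.det / h (A v') := by
  rw [extendedEnd, LinearMap.det_comp, transvection.det]
  simp only [LinearMap.sub_apply, comp_apply, map_smul, hv', smul_eq_mul]
  field_simp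
  ring

theorem det_restrict_extendedEnd [FiniteDimensional K V] (hv' : h v' = 1) (hc : h (A v') ≠ 0) :
    ((extendedEnd h A v').restrict (ker_le_comap_extendedEnd h A hc)).det = A.det / h (A v') := by
  rw [det_restrict_eq_det_of_sub_mem _ (sub_mem_ker_extendedEnd h A hc),
    det_extendedEnd h A hv' hc]

end Extension

section Hyperplane

variable {d : ℕ}

noncomputable def coordSum (d : ℕ) : Dual ℝ (Fin (d + 1) → ℝ) :=
  ∑ i, LinearMap.proj i

@[simp]
theorem coordSum_apply (z : Fin (d + 1) → ℝ) : coordSum d z = ∑ i, z i := by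
  simp [coordSum]

theorem PSub_eq_ker_coordSum : PSub d = ker (coordSum d) := rfl

theorem piProj_of_mem (y : Fin (d + 1) → ℝ) {p : Fin (d + 1) → ℝ} (hp : p ∈ PSub d) :
    piProj y p = p := by
  rw [PSub_eq_ker_coordSum, mem_ker, coordSum_apply] at hp
  simp [piProj, hp]

theorem piProj_of_sum_eq_one {y : Fin (d + 1) → ℝ} (hy : ∑ i, y i = 1)
    (z : Fin (d + 1) → ℝ) : piProj y z = z - (∑ i, z i) • y := by
  rw [piProj, hy, div_one]

/-- `N ∘ π_{v'} = π_v ∘ M`, where `v = M v' / h(M v')`. -/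
def IntertwinesProj (M : Matrix (Fin (d + 1)) (Fin (d + 1)) ℝ) (v' : Fin (d + 1) → ℝ)
    (N : PSub d →ₗ[ℝ] PSub d) : Prop :=
  ∀ (p : PSub d) (z : Fin (d + 1) → ℝ), piProj v' z = (p : Fin (d + 1) → ℝ) →
    ((N p : PSub d) : Fin (d + 1) → ℝ) =
      piProj ((∑ i, (M.mulVec v') i)⁻¹ • M.mulVec v') (M.mulVec z)

variable {M : Matrix (Fin (d + 1)) (Fin (d + 1)) ℝ} {v' : Fin (d + 1) → ℝ}

theorem IntertwinesProj.unique {N N' : PSub d →ₗ[ℝ] PSub d} (hN : IntertwinesProj M v' N)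
    (hN' : IntertwinesProj M v' N') : N = N' :=
  LinearMap.ext fun p => Subtype.ext <|
    (hN p p (piProj_of_mem v' p.2)).trans (hN' p p (piProj_of_mem v' p.2)).symm

noncomputable def inducedEnd (M : Matrix (Fin (d + 1)) (Fin (d + 1)) ℝ) (v' : Fin (d + 1) → ℝ)
    (hc : ∑ i, (M.mulVec v') i ≠ 0) : PSub d →ₗ[ℝ] PSub d :=
  (extendedEnd (coordSum d) (Matrix.toLin' M) v').restrict
    (ker_le_comap_extendedEnd (coordSum d) (Matrix.toLin' M) (by simpa using hc))

theorem intertwinesProj_inducedEnd (hv' : ∑ i, v' i = 1) (hc : ∑ i, (M.mulVec v') i ≠ 0) :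
    IntertwinesProj M v' (inducedEnd M v' hc) := by
  intro p z hz
  have hv : ∑ i, ((∑ i, (M.mulVec v') i)⁻¹ • M.mulVec v') i = 1 := by
    simpa [← Finset.mul_sum] using inv_mul_cancel₀ hc
  change extendedEnd (coordSum d) (Matrix.toLin' M) v' p = _
  rw [← hz, piProj_of_sum_eq_one hv', piProj_of_sum_eq_one hv,
    ← coordSum_apply, extendedEnd_sub_smul _ _ (by simpa using hv') (by simpa using hc)]
  simp

theorem det_inducedEnd (hv' : ∑ i, v' i = 1) (hc : ∑ i, (M.mulVec v') i ≠ 0) :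
    (inducedEnd M v' hc).det = M.det / ∑ i, (M.mulVec v') i := by
  refine (det_restrict_extendedEnd (coordSum d) (Matrix.toLin' M) (by simpa using hv')
    (by simpa using hc)).trans ?_
  rw [LinearMap.det_toLin', coordSum_apply, Matrix.toLin'_apply]

end Hyperplane

theorem induced_endomorphism_det_general {d : ℕ}
    (M : Matrix (Fin (d + 1)) (Fin (d + 1)) ℝ)
    (v' : Fin (d + 1) → ℝ) (hv' : (∑ i, v' i) = 1)
    (hMv' : (∑ i, (M.mulVec v') i) ≠ 0) :
    (∃! N : PSub d →ₗ[ℝ] PSub d,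
      ∀ (p : PSub d) (z : Fin (d + 1) → ℝ),
        piProj v' z = (p : Fin (d + 1) → ℝ) →
        ((N p : PSub d) : Fin (d + 1) → ℝ) =
          piProj ((∑ i, (M.mulVec v') i)⁻¹ • M.mulVec v') (M.mulVec z)) ∧
    (∀ N : PSub d →ₗ[ℝ] PSub d,
      (∀ (p : PSub d) (z : Fin (d + 1) → ℝ),
        piProj v' z = (p : Fin (d + 1) → ℝ) →
        ((N p : PSub d) : Fin (d + 1) → ℝ) =
          piProj ((∑ i, (M.mulVec v') i)⁻¹ • M.mulVec v') (M.mulVec z)) →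
      LinearMap.det N = M.det / (∑ i, (M.mulVec v') i)) := by
  have hN₀ := intertwinesProj_inducedEnd hv' hMv'
  refine ⟨⟨inducedEnd M v' hMv', hN₀, fun N hN => IntertwinesProj.unique hN hN₀⟩,
    fun N hN => ?_⟩
  rw [IntertwinesProj.unique hN hN₀, det_inducedEnd hv' hMv']

/-- There is a unique linear endomorphism `N` of the hyperplane `P` with
`N ∘ π_{v'} = π_v ∘ M` (where `v = M v' / h(M v')`), and its determinant as an
endomorphism of `P` is `det M / h(M v')`. -/
theorem induced_endomorphism_det {d : ℕ} (hd : 1 ≤ d)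
    (M : Matrix (Fin (d + 1)) (Fin (d + 1)) ℝ) (hM : IsUnit M.det)
    (v' : Fin (d + 1) → ℝ) (hv' : (∑ i, v' i) = 1)
    (hMv' : (∑ i, (M.mulVec v') i) ≠ 0) :
    (∃! N : PSub d →ₗ[ℝ] PSub d,
      ∀ (p : PSub d) (z : Fin (d + 1) → ℝ),
        piProj v' z = (p : Fin (d + 1) → ℝ) →
        ((N p : PSub d) : Fin (d + 1) → ℝ) =
          piProj ((∑ i, (M.mulVec v') i)⁻¹ • M.mulVec v') (M.mulVec z)) ∧
    (∀ N : PSub d →ₗ[ℝ] PSub d,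
      (∀ (p : PSub d) (z : Fin (d + 1) → ℝ),
        piProj v' z = (p : Fin (d + 1) → ℝ) →
        ((N p : PSub d) : Fin (d + 1) → ℝ) =
          piProj ((∑ i, (M.mulVec v') i)⁻¹ • M.mulVec v') (M.mulVec z)) →
      LinearMap.det N = M.det / (∑ i, (M.mulVec v') i)) :=
  induced_endomorphism_det_general M v' hv' hMv'
end

section
/- Let (M_n)_{n∈ℕ} be invertible (d+1)×(d+1) matrices with nonnegative entries, let v ∈ ℝ^{d+1} with ‖v‖₁ = 1 be such that ⋂_{n∈ℕ} M_{[0,n)}(ℝ_{≥0}^{d+1}) = {t·v : t ≥ 0}, and let E be a hyperplane (codimension-1 subspace) of the dual space (ℝ^{d+1})*. Suppose there exist real numbers θ₁ > θ₂ such that: (i) for every φ ∈ E, limsup_{n→∞} (1/n)·ln ‖φ M_{[0,n)}‖_∞ ≤ θ₂, and (ii) for every φ ∉ E, liminf_{n→∞} (1/n)·ln ‖φ M_{[0,n)}‖_∞ ≥ θ₁. Then E = v° = {φ ∈ (ℝ^{d+1})* : φ(v) = 0}. -/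
noncomputable def normInf {d : ℕ} (z : Fin (d + 1) → ℝ) : ℝ :=
  ⨆ i, |z i|

/-! If `φ(v) > 0`, compactness of the simplex makes `φ ≥ φ(v)/2` on the normalised columns of
`M_{[0,n)}` for large `n`, since these columns lie in the cones shrinking to the ray of `v`.
As `M_{[0,n)}` is nonnegative, this gives `‖ψ M_{[0,n)}‖_∞ ≤ C ‖φ M_{[0,n)}‖_∞` for every `ψ`,
so `φ` grows at least as fast as any `ψ ∉ E`, i.e. at rate `≥ θ₁ > θ₂`, and `φ ∉ E`.
Hence `E ⊆ v°`, and equality holds because both are hyperplanes. -/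

open Filter Topology Matrix

lemma IsCompact.eventually_inter_subset_of_antitone {X : Type*} [TopologicalSpace X]
    {K U : Set X} (hK : IsCompact K) (hU : IsOpen U) {C : ℕ → Set X} (hC : Antitone C)
    (hCc : ∀ n, IsClosed (C n)) (h : K ∩ ⋂ n, C n ⊆ U) : ∀ᶠ n in atTop, K ∩ C n ⊆ U := by
  obtain ⟨N, hN⟩ := hK.elim_directed_family_closed (fun n => C n ∩ Uᶜ)
    (fun n => (hCc n).inter hU.isClosed_compl)
    (by rw [← Set.iInter_inter, ← Set.inter_assoc, ← Set.sdiff_eq, Set.sdiff_eq_empty]; exact h)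
    (Antitone.directed_ge fun _ _ hmn => Set.inter_subset_inter_left _ (hC hmn))
  filter_upwards [eventually_ge_atTop N] with n hn u hu
  by_contra hUu
  exact Set.eq_empty_iff_forall_notMem.mp hN u ⟨hu.1, hC hn hu.2, hUu⟩

section Orthant

variable {ι : Type*} [Fintype ι]

def coneImage (A : Matrix ι ι ℝ) : Set (ι → ℝ) :=
  (fun z => A.mulVec z) '' {z : ι → ℝ | ∀ i, 0 ≤ z i}

omit [Fintype ι] in
lemma isClosed_orthant : IsClosed {z : ι → ℝ | ∀ i, 0 ≤ z i} := by
  simp only [Set.ofPred_forall]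
  exact isClosed_iInter fun i => isClosed_le continuous_const (continuous_apply i)

lemma isClosed_coneImage [DecidableEq ι] {A : Matrix ι ι ℝ} (hA : IsUnit A.det) :
    IsClosed (coneImage A) := by
  have hinv : Function.LeftInverse (A⁻¹.mulVec) A.mulVec := fun z => by
    rw [mulVec_mulVec, nonsing_inv_mul _ hA, one_mulVec]
  have hinv' : Function.RightInverse (A⁻¹.mulVec) A.mulVec := fun z => by
    rw [mulVec_mulVec, mul_nonsing_inv _ hA, one_mulVec]
  rw [coneImage, Set.image_eq_preimage_of_inverse hinv hinv']
  exact isClosed_orthant.preimage (Continuous.matrix_mulVec continuous_const continuous_id)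

lemma mulVec_nonneg_of_nonneg {A : Matrix ι ι ℝ} (hA : ∀ i j, 0 ≤ A i j) {z : ι → ℝ}
    (hz : ∀ i, 0 ≤ z i) (i : ι) : 0 ≤ A.mulVec z i :=
  Finset.sum_nonneg fun j _ => mul_nonneg (hA i j) (hz j)

lemma coneImage_subset_orthant {A : Matrix ι ι ℝ} (hA : ∀ i j, 0 ≤ A i j) :
    coneImage A ⊆ {z | ∀ i, 0 ≤ z i} := by
  rintro _ ⟨z, hz, rfl⟩
  exact mulVec_nonneg_of_nonneg hA hz

lemma coneImage_mul_subset (A : Matrix ι ι ℝ) {B : Matrix ι ι ℝ} (hB : ∀ i j, 0 ≤ B i j) :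
    coneImage (A * B) ⊆ coneImage A := by
  rintro _ ⟨z, hz, rfl⟩
  exact ⟨B.mulVec z, mulVec_nonneg_of_nonneg hB hz, mulVec_mulVec z A B⟩

lemma smul_mem_coneImage {A : Matrix ι ι ℝ} {u : ι → ℝ} (hu : u ∈ coneImage A) {t : ℝ}
    (ht : 0 ≤ t) : t • u ∈ coneImage A := by
  obtain ⟨z, hz, rfl⟩ := hu
  exact ⟨t • z, fun i => mul_nonneg ht (hz i), mulVec_smul A t z⟩

lemma col_mem_coneImage [DecidableEq ι] (A : Matrix ι ι ℝ) (j : ι) :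
    (fun i => A i j) ∈ coneImage A := by
  refine ⟨Pi.single j 1, fun i => ?_, mulVec_single_one A j⟩
  rw [Pi.single_apply]
  split_ifs <;> norm_num

lemma eventually_lt_dotProduct_on_stdSimplex {C : ℕ → Set (ι → ℝ)} (hC : Antitone C)
    (hCc : ∀ n, IsClosed (C n)) {v : ι → ℝ} (hv : ∑ i, v i = 1)
    (hray : ⋂ n, C n ⊆ {w | ∃ t : ℝ, 0 ≤ t ∧ w = t • v}) {φ : ι → ℝ} {a : ℝ}
    (ha : a < φ ⬝ᵥ v) : ∀ᶠ n in atTop, ∀ u ∈ stdSimplex ℝ ι ∩ C n, a < φ ⬝ᵥ u := by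
  have hU : IsOpen {u : ι → ℝ | a < φ ⬝ᵥ u} :=
    isOpen_lt continuous_const (continuous_const.dotProduct continuous_id)
  refine (isCompact_stdSimplex ℝ ι).eventually_inter_subset_of_antitone hU hC hCc ?_
  rintro u ⟨hu, hCu⟩
  obtain ⟨t, -, rfl⟩ := hray hCu
  have ht : t = 1 := by simpa [← Finset.mul_sum, hv] using hu.2
  simpa [ht] using ha

lemma mul_sum_le_dotProduct_of_cone {S : Set (ι → ℝ)} (hS : ∀ u ∈ S, ∀ i, 0 ≤ u i)
    (hsmul : ∀ u ∈ S, ∀ t : ℝ, 0 ≤ t → t • u ∈ S) {φ : ι → ℝ} {a : ℝ}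
    (h : ∀ u ∈ stdSimplex ℝ ι ∩ S, a < φ ⬝ᵥ u) {u : ι → ℝ} (hu : u ∈ S) :
    a * ∑ i, u i ≤ φ ⬝ᵥ u := by
  set s := ∑ i, u i
  rcases (Finset.sum_nonneg fun i _ => hS u hu i : 0 ≤ s).eq_or_lt with hs | hs
  · have hu0 : u = 0 := funext fun i =>
      (Finset.sum_eq_zero_iff_of_nonneg fun i _ => hS u hu i).mp hs.symm i (Finset.mem_univ i)
    simp [s, hu0]
  · have hsimplex : s⁻¹ • u ∈ stdSimplex ℝ ι ∩ S :=
      ⟨⟨fun i => mul_nonneg (inv_nonneg.mpr hs.le) (hS u hu i), by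
        simp [← Finset.mul_sum, s, inv_mul_cancel₀ hs.ne']⟩, hsmul u hu _ (inv_nonneg.mpr hs.le)⟩
    have := h _ hsimplex
    rw [dotProduct_smul, smul_eq_mul, lt_inv_mul_iff₀ hs] at this
    linarith

lemma norm_vecMul_le_of_colSum_le {A : Matrix ι ι ℝ} (hA : ∀ i j, 0 ≤ A i j)
    {φ : ι → ℝ} {c : ℝ} (hc : 0 < c) (hφ : ∀ j, c * ∑ i, A i j ≤ (φ ᵥ* A) j) (ψ : ι → ℝ) :
    ‖ψ ᵥ* A‖ ≤ ‖ψ‖ / c * ‖φ ᵥ* A‖ := by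
  refine pi_norm_le_iff_of_nonneg (by positivity) |>.mpr fun j => ?_
  calc ‖(ψ ᵥ* A) j‖ ≤ ∑ i, ‖ψ i‖ * A i j := by
        refine (norm_sum_le _ _).trans (Finset.sum_le_sum fun i _ => ?_)
        rw [norm_mul, Real.norm_of_nonneg (hA i j)]
    _ ≤ ∑ i, ‖ψ‖ * A i j :=
        Finset.sum_le_sum fun i _ => mul_le_mul_of_nonneg_right (norm_le_pi_norm ψ i) (hA i j)
    _ = ‖ψ‖ / c * (c * ∑ i, A i j) := by rw [← Finset.mul_sum]; field_simp
    _ ≤ ‖ψ‖ / c * ‖φ ᵥ* A‖ := by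
        gcongr
        exact (hφ j).trans ((le_abs_self _).trans (norm_le_pi_norm (φ ᵥ* A) j))

end Orthant

lemma liminf_coe_le_liminf_of_le_add {α : Type*} {l : Filter α} [l.NeBot] {a b c : α → ℝ}
    (h : ∀ᶠ x in l, a x ≤ b x + c x) (hc : Tendsto c l (𝓝 0)) :
    liminf (fun x => (a x : EReal)) l ≤ liminf (fun x => (b x : EReal)) l := by
  have hc' : limsup (fun x => (c x : EReal)) l = 0 :=
    ((continuous_coe_real_ereal.tendsto 0).comp hc).limsup_eq
  calc liminf (fun x => (a x : EReal)) l
      ≤ liminf ((fun x => (c x : EReal)) + fun x => (b x : EReal)) l :=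
        liminf_le_liminf (h.mono fun x hx => by
          simp only [Pi.add_apply, ← EReal.coe_add, EReal.coe_le_coe_iff]; linarith)
    _ ≤ limsup (fun x => (c x : EReal)) l + liminf (fun x => (b x : EReal)) l :=
        EReal.liminf_add_le (by simp [hc']) (by simp [hc'])
    _ = liminf (fun x => (b x : EReal)) l := by rw [hc', zero_add]

lemma liminf_logRate_le_of_le_mul {f g : ℕ → ℝ} {K : ℝ} (hg : ∀ᶠ n in atTop, 0 < g n)
    (hgf : ∀ᶠ n in atTop, g n ≤ K * f n) :
    liminf (fun n : ℕ => (((n : ℝ)⁻¹ * Real.log (g n) : ℝ) : EReal)) atTop ≤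
      liminf (fun n : ℕ => (((n : ℝ)⁻¹ * Real.log (f n) : ℝ) : EReal)) atTop := by
  refine liminf_coe_le_liminf_of_le_add (c := fun n : ℕ => (n : ℝ)⁻¹ * Real.log K) ?_ ?_
  · filter_upwards [hg, hgf] with n hgn hgfn
    have hKf : 0 < K * f n := hgn.trans_le hgfn
    rw [← mul_add, ← Real.log_mul (right_ne_zero_of_mul hKf.ne') (left_ne_zero_of_mul hKf.ne'),
      mul_comm (f n)]
    exact mul_le_mul_of_nonneg_left (Real.log_le_log hgn hgfn) (by positivity)
  · simpa using (tendsto_inv_atTop_zero.comp tendsto_natCast_atTop_atTop).mul_const (Real.log K)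

lemma Submodule.eq_ker_of_le_of_finrank_add_one {K V : Type*} [Field K] [AddCommGroup V]
    [Module K V] [FiniteDimensional K V] {E : Submodule K V} {f : Module.Dual K V} (hf : f ≠ 0)
    (hE : Module.finrank K E + 1 = Module.finrank K V) (hle : E ≤ LinearMap.ker f) :
    E = LinearMap.ker f :=
  Submodule.eq_of_le_of_finrank_eq hle (by have := f.finrank_ker_add_one_of_ne_zero hf; omega)

lemma Submodule.le_ker_of_forall_nonpos {V : Type*} [AddCommGroup V] [Module ℝ V]
    {E : Submodule ℝ V} {f : V →ₗ[ℝ] ℝ} (h : ∀ x ∈ E, f x ≤ 0) : E ≤ LinearMap.ker f :=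
  fun x hx => le_antisymm (h x hx) (by simpa using h (-x) (E.neg_mem hx))

section Cocycle

variable {d : ℕ} {M : ℕ → Matrix (Fin (d + 1)) (Fin (d + 1)) ℝ}

lemma normInf_eq_norm (z : Fin (d + 1) → ℝ) : normInf z = ‖z‖ :=
  le_antisymm (ciSup_le fun i => norm_le_pi_norm z i)
    (pi_norm_le_iff_of_nonneg (Real.iSup_nonneg fun i => abs_nonneg (z i)) |>.mpr
      fun i => le_ciSup (Finite.bddAbove_range fun i => |z i|) i)

lemma prodMR_zero_zero : prodMR M 0 0 = 1 := by simp [prodMR]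

lemma prodMR_zero_succ (n : ℕ) : prodMR M 0 (n + 1) = prodMR M 0 n * M n := by
  simp [prodMR, List.range'_concat]

lemma prodMR_nonneg (hpos : ∀ n i j, 0 ≤ M n i j) (n : ℕ) (i j : Fin (d + 1)) :
    0 ≤ prodMR M 0 n i j := by
  induction n generalizing i j with
  | zero => rw [prodMR_zero_zero, one_apply]; positivity
  | succ n ih =>
    rw [prodMR_zero_succ, mul_apply]
    exact Finset.sum_nonneg fun k _ => mul_nonneg (ih i k) (hpos n k j)

lemma isUnit_det_prodMR (hinv : ∀ n, IsUnit (M n).det) (n : ℕ) : IsUnit (prodMR M 0 n).det := by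
  induction n with
  | zero => simp [prodMR_zero_zero]
  | succ n ih => rw [prodMR_zero_succ, det_mul]; exact ih.mul (hinv n)

lemma antitone_coneImage_prodMR (hpos : ∀ n i j, 0 ≤ M n i j) :
    Antitone fun n => coneImage (prodMR M 0 n) :=
  antitone_nat_of_succ_le fun n => by
    rw [prodMR_zero_succ]; exact coneImage_mul_subset _ (hpos n)

lemma eventually_norm_vecMul_prodMR_le (hinv : ∀ n, IsUnit (M n).det)
    (hpos : ∀ n i j, 0 ≤ M n i j) {v : Fin (d + 1) → ℝ} (hv : ∑ i, v i = 1)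
    (hcone : ⋂ n, coneImage (prodMR M 0 n) ⊆ {w | ∃ t : ℝ, 0 ≤ t ∧ w = t • v})
    {φ : Fin (d + 1) → ℝ} (hφ : 0 < φ ⬝ᵥ v) (ψ : Fin (d + 1) → ℝ) :
    ∀ᶠ n in atTop, ‖ψ ᵥ* prodMR M 0 n‖ ≤ ‖ψ‖ / (φ ⬝ᵥ v / 2) * ‖φ ᵥ* prodMR M 0 n‖ := by
  filter_upwards [eventually_lt_dotProduct_on_stdSimplex (antitone_coneImage_prodMR hpos)
    (fun n => isClosed_coneImage (isUnit_det_prodMR hinv n)) hv hcone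
    (half_lt_self hφ)] with n hn
  -- each column of `M_{[0,n)}` lies in the cone, so `φ` dominates its column sums
  refine norm_vecMul_le_of_colSum_le (prodMR_nonneg hpos n) (half_pos hφ) (fun j => ?_) ψ
  exact mul_sum_le_dotProduct_of_cone (coneImage_subset_orthant (prodMR_nonneg hpos n))
    (fun _ hu _ ht => smul_mem_coneImage hu ht) hn (col_mem_coneImage _ j)

lemma dotProduct_nonpos_of_liminf_lt (hinv : ∀ n, IsUnit (M n).det)
    (hpos : ∀ n i j, 0 ≤ M n i j) {v : Fin (d + 1) → ℝ} (hv : ∑ i, v i = 1)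
    (hcone : ⋂ n, coneImage (prodMR M 0 n) ⊆ {w | ∃ t : ℝ, 0 ≤ t ∧ w = t • v})
    {φ ψ : Fin (d + 1) → ℝ} (hψ : ψ ≠ 0)
    (hlt : liminf (fun n : ℕ =>
        (((n : ℝ)⁻¹ * Real.log (normInf (φ ᵥ* prodMR M 0 n)) : ℝ) : EReal)) atTop <
      liminf (fun n : ℕ =>
        (((n : ℝ)⁻¹ * Real.log (normInf (ψ ᵥ* prodMR M 0 n)) : ℝ) : EReal)) atTop) :
    φ ⬝ᵥ v ≤ 0 := by
  by_contra! hφ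
  refine hlt.not_ge <|
    liminf_logRate_le_of_le_mul (K := ‖ψ‖ / (φ ⬝ᵥ v / 2)) (.of_forall fun n => ?_) ?_
  · rw [normInf_eq_norm, norm_pos_iff]
    simpa using (vecMul_injective_of_isUnit
      ((isUnit_iff_isUnit_det _).mpr (isUnit_det_prodMR hinv n))).ne hψ
  · simpa only [normInf_eq_norm] using eventually_norm_vecMul_prodMR_le hinv hpos hv hcone hφ ψ

end Cocycle

theorem second_space_is_annihilator_general {d : ℕ}
    (M : ℕ → Matrix (Fin (d + 1)) (Fin (d + 1)) ℝ)
    (hinv : ∀ n, IsUnit (M n).det)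
    (hpos : ∀ n i j, 0 ≤ M n i j)
    (v : Fin (d + 1) → ℝ) (hv1 : (∑ i, |v i|) = 1)
    (hcone : (⋂ n : ℕ, (fun z => (prodMR M 0 n).mulVec z) ''
        {z : Fin (d + 1) → ℝ | ∀ i, 0 ≤ z i}) = {w | ∃ t : ℝ, 0 ≤ t ∧ w = t • v})
    (E : Submodule ℝ (Fin (d + 1) → ℝ))
    (hE : Module.finrank ℝ E = d)
    (θ₁ θ₂ : ℝ) (hθ : θ₂ < θ₁)
    (h1 : ∀ φ : Fin (d + 1) → ℝ, φ ∈ E → φ ≠ 0 →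
      Filter.limsup (fun n : ℕ =>
          (((n : ℝ)⁻¹ * Real.log (normInf (Matrix.vecMul φ (prodMR M 0 n))) : ℝ) :
            EReal)) Filter.atTop ≤ (θ₂ : EReal))
    (h2 : ∀ φ : Fin (d + 1) → ℝ, φ ∉ E →
      (θ₁ : EReal) ≤ Filter.liminf (fun n : ℕ =>
          (((n : ℝ)⁻¹ * Real.log (normInf (Matrix.vecMul φ (prodMR M 0 n))) : ℝ) :
            EReal)) Filter.atTop) :
    ∀ φ : Fin (d + 1) → ℝ, φ ∈ E ↔ dotProduct φ v = 0 := by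
  have hvC : v ∈ ⋂ n, coneImage (prodMR M 0 n) := hcone ▸ ⟨1, zero_le_one, (one_smul ℝ v).symm⟩
  have hv0 : ∀ i, 0 ≤ v i :=
    coneImage_subset_orthant (prodMR_nonneg hpos 0) (Set.mem_iInter.mp hvC 0)
  have hv : ∑ i, v i = 1 := by simpa only [abs_of_nonneg (hv0 _)] using hv1
  have hEtop : E ≠ ⊤ := fun h => by
    rw [h, finrank_top, Module.finrank_fin_fun] at hE
    omega
  obtain ⟨ψ, -, hψE⟩ := SetLike.exists_of_lt (lt_top_iff_ne_top.mpr hEtop)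
  have hψ : ψ ≠ 0 := fun h => hψE (h ▸ E.zero_mem)
  have hnonpos : ∀ φ ∈ E, φ ⬝ᵥ v ≤ 0 := by
    intro φ hφ
    rcases eq_or_ne φ 0 with rfl | hφ0
    · simp
    refine dotProduct_nonpos_of_liminf_lt hinv hpos hv hcone.subset hψ ?_
    calc _ ≤ _ := liminf_le_limsup
      _ ≤ (θ₂ : EReal) := h1 φ hφ hφ0
      _ < θ₁ := EReal.coe_lt_coe_iff.mpr hθ
      _ ≤ _ := h2 ψ hψE
  set f := dotProductEquiv ℝ (Fin (d + 1)) v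
  have hf : f ≠ 0 := (LinearEquiv.map_ne_zero_iff _).mpr fun h => by simp [h] at hv
  have hEf : E = LinearMap.ker f :=
    Submodule.eq_ker_of_le_of_finrank_add_one hf (by simp [hE]) <|
      Submodule.le_ker_of_forall_nonpos fun φ hφ => by
        simpa [f, dotProduct_comm] using hnonpos φ hφ
  intro φ
  simp [hEf, f, dotProduct_comm]

/-- If the nested images of the positive orthant intersect in the ray of `v`, and `E`
is a hyperplane of the dual space (identified with row vectors) on which the cocycle
contracts at rate at most `θ₂` while expanding at rate at least `θ₁ > θ₂` outside of
`E`, then `E = v° = {φ | φ(v) = 0}`. -/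
theorem second_space_is_annihilator {d : ℕ} (hd : 1 ≤ d)
    (M : ℕ → Matrix (Fin (d + 1)) (Fin (d + 1)) ℝ)
    (hinv : ∀ n, IsUnit (M n).det)
    (hpos : ∀ n i j, 0 ≤ M n i j)
    (v : Fin (d + 1) → ℝ) (hv1 : (∑ i, |v i|) = 1)
    (hcone : (⋂ n : ℕ, (fun z => (prodMR M 0 n).mulVec z) ''
        {z : Fin (d + 1) → ℝ | ∀ i, 0 ≤ z i}) = {w | ∃ t : ℝ, 0 ≤ t ∧ w = t • v})
    (E : Submodule ℝ (Fin (d + 1) → ℝ))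
    (hE : Module.finrank ℝ E = d)
    (θ₁ θ₂ : ℝ) (hθ : θ₂ < θ₁)
    (h1 : ∀ φ : Fin (d + 1) → ℝ, φ ∈ E → φ ≠ 0 →
      Filter.limsup (fun n : ℕ =>
          (((n : ℝ)⁻¹ * Real.log (normInf (Matrix.vecMul φ (prodMR M 0 n))) : ℝ) :
            EReal)) Filter.atTop ≤ (θ₂ : EReal))
    (h2 : ∀ φ : Fin (d + 1) → ℝ, φ ∉ E →
      (θ₁ : EReal) ≤ Filter.liminf (fun n : ℕ =>
          (((n : ℝ)⁻¹ * Real.log (normInf (Matrix.vecMul φ (prodMR M 0 n))) : ℝ) :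
            EReal)) Filter.atTop) :
    ∀ φ : Fin (d + 1) → ℝ, φ ∈ E ↔ dotProduct φ v = 0 :=
  second_space_is_annihilator_general M hinv hpos v hv1 hcone E hE θ₁ θ₂ hθ h1 h2
end

section
/- Let σ be a non-erasing substitution on the finite alphabet A = {0,…,d}, and let u = (u_k)_{k∈ℕ} be a sequence of infinite words over A such that σ(u_{k+1}) = u_k for every k (i.e., for every k and n, the image under σ of the length-n prefix of u_{k+1} is a prefix of u_k). Then u_0 is a periodic point of σ: there exists an integer p ≥ 1 such that σ^p(u_0) = u_0, i.e., for every n, the image under σ^p of the length-n prefix of u_0 is a prefix of u_0. -/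
/-- `l` is a prefix of the infinite word `w`. -/
def IsPrefixOf {d : ℕ} (l : List (Fin (d + 1))) (w : ℕ → Fin (d + 1)) : Prop :=
  l = (List.range l.length).map w

/-!
Since `u k = σ^j (u (j + k))`, every letter of `u k` descends from a letter of `u (j + k)` at a
position no larger. Call a letter growing if its iterated images have unbounded length. If no
letter at positions `< n` grows from level `K` on, then these letters satisfy `|σ a| = 1`
(otherwise the letter they descend from infinitely often would grow), so each of these columns
`k ↦ u k i` is a backward orbit of `a ↦ head (σ a)` on the finite alphabet and is therefore
periodic with period `p = (card A)!`. Otherwise, at the first position `m` that keeps growing,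
column `m` is still such a backward orbit, and beyond `m` the words `u K` and `u (K + p)` both
continue with the arbitrarily long words `σ^(N p) (u K m)`, so `u K = u (K + p)`. In both cases
the prefixes of `u 0 = σ^K (u K)` and `u p = σ^K (u (K + p))` agree, so `σ^p (u 0) = σ^p (u p) = u 0`.
-/

open Function

variable {α : Type*}

def subst (σ : α → List α) (w : List α) : List α := w.flatMap σ

def IsGrowing (σ : α → List α) (a : α) : Prop :=
  ∀ C, ∃ n, C ≤ ((subst σ)^[n] [a]).length

section FiniteWords

variable {σ : α → List α}

lemma subst_append (w₁ w₂ : List α) : subst σ (w₁ ++ w₂) = subst σ w₁ ++ subst σ w₂ :=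
  List.flatMap_append

@[simp] lemma subst_singleton (a : α) : subst σ [a] = σ a := by
  simp [subst]

lemma iterate_subst (σ : α → List α) (n : ℕ) :
    (subst σ)^[n] = subst fun a => (subst σ)^[n] [a] := by
  funext w
  induction n with
  | zero => simp [subst]
  | succ n ih => simp only [iterate_succ_apply', ih, subst, List.flatMap_assoc]

lemma length_le_length_subst (hσ : ∀ a, σ a ≠ []) (w : List α) :
    w.length ≤ (subst σ w).length := by
  induction w with
  | nil => simp
  | cons a w ih =>
    have := List.length_pos_iff.2 (hσ a)
    simp only [subst, List.flatMap_cons, List.length_append, List.length_cons] at *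
    omega

lemma monotone_length_iterate_subst (hσ : ∀ a, σ a ≠ []) (w : List α) :
    Monotone fun n => ((subst σ)^[n] w).length :=
  monotone_nat_of_le_succ fun n => by
    simpa only [iterate_succ_apply'] using length_le_length_subst hσ _

lemma length_le_length_iterate_subst (hσ : ∀ a, σ a ≠ []) (n : ℕ) (w : List α) :
    w.length ≤ ((subst σ)^[n] w).length :=
  monotone_length_iterate_subst hσ w (Nat.zero_le n)

lemma iterate_subst_singleton_ne_nil (hσ : ∀ a, σ a ≠ []) (n : ℕ) (a : α) :
    (subst σ)^[n] [a] ≠ [] :=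
  List.length_pos_iff.1 (length_le_length_iterate_subst hσ n [a])

lemma length_le_length_subst_of_mem {a : α} {w : List α} (ha : a ∈ w) :
    (σ a).length ≤ (subst σ w).length := by
  rw [subst, List.length_flatMap]
  exact List.le_sum_of_mem (List.mem_map_of_mem ha)

lemma length_lt_length_subst (hσ : ∀ a, σ a ≠ []) {a : α} {w : List α} (ha : a ∈ w)
    (h2 : 2 ≤ (σ a).length) : w.length < (subst σ w).length := by
  obtain ⟨s, t, rfl⟩ := List.append_of_mem ha
  have hs := length_le_length_subst hσ s
  have ht := length_le_length_subst hσ t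
  simp only [subst, List.flatMap_append, List.flatMap_cons, List.length_append,
    List.length_cons] at *
  omega

lemma length_subst_of_forall_length_eq_one {w : List α} (hw : ∀ a ∈ w, (σ a).length = 1) :
    (subst σ w).length = w.length := by
  rw [subst, List.length_flatMap, List.map_congr_left hw]
  simp

lemma isGrowing_of_infinite_setOf_mem (hσ : ∀ a, σ a ≠ []) {a b : α}
    (hinf : {n | b ∈ (subst σ)^[n] [a]}.Infinite) (hb : 2 ≤ (σ b).length) : IsGrowing σ a := by
  intro C
  induction C with
  | zero => exact ⟨0, Nat.zero_le _⟩
  | succ C ih =>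
    obtain ⟨n, hn⟩ := ih
    obtain ⟨j, hj, hnj⟩ := hinf.exists_gt n
    refine ⟨j + 1, ?_⟩
    have hstep := length_lt_length_subst hσ hj hb
    have hmono := monotone_length_iterate_subst hσ [a] hnj.le
    rw [iterate_succ_apply']
    simp only at hmono
    omega

end FiniteWords

section InfiniteWords

def wordPrefix (x : ℕ → α) (n : ℕ) : List α := (List.range n).map x

/-- `IsImage τ x y` says that `τ`, extended to infinite words through prefixes, sends `x` to `y`. -/
def IsImage (τ : List α → List α) (x y : ℕ → α) : Prop :=
  ∀ n, τ (wordPrefix x n) = wordPrefix y (τ (wordPrefix x n)).length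

variable {x x' y y' : ℕ → α}

@[simp] lemma length_wordPrefix (x : ℕ → α) (n : ℕ) : (wordPrefix x n).length = n := by
  simp [wordPrefix]

lemma wordPrefix_succ (x : ℕ → α) (n : ℕ) : wordPrefix x (n + 1) = wordPrefix x n ++ [x n] := by
  simp [wordPrefix, List.range_succ]

lemma mem_wordPrefix {a : α} {n : ℕ} : a ∈ wordPrefix x n ↔ ∃ i < n, x i = a := by
  simp [wordPrefix]

lemma getElem?_wordPrefix {i n : ℕ} (h : i < n) : (wordPrefix x n)[i]? = some (x i) := by
  simp [wordPrefix, h]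

lemma wordPrefix_eq_wordPrefix_iff {n : ℕ} :
    wordPrefix x n = wordPrefix y n ↔ ∀ i < n, x i = y i := by
  simp [wordPrefix, List.map_inj_left]

namespace IsImage

variable {τ τ' : List α → List α}

lemma id_self (x : ℕ → α) : IsImage id x x := fun n => by simp

lemma comp {z : ℕ → α} (h : IsImage τ x y) (h' : IsImage τ' y z) : IsImage (τ' ∘ τ) x z :=
  fun n => by
    rw [comp_apply, h n]
    exact h' _

lemma forall_lt_eq {N : ℕ} (h : IsImage τ x y) (h' : IsImage τ x' y') (hx : ∀ i < N, x i = x' i) :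
    ∀ i < (τ (wordPrefix x N)).length, y i = y' i := by
  have hpre := wordPrefix_eq_wordPrefix_iff.2 hx
  have himage := h' N
  rw [← hpre] at himage
  exact wordPrefix_eq_wordPrefix_iff.1 ((h N).symm.trans himage)

variable {σ : α → List α}

lemma exists_le_mem (hσ : ∀ a, σ a ≠ []) (h : IsImage (subst σ) x y) (i : ℕ) :
    ∃ j ≤ i, y i ∈ σ (x j) := by
  have hlen := length_le_length_subst hσ (wordPrefix x (i + 1))
  rw [length_wordPrefix] at hlen
  have hmem : y i ∈ subst σ (wordPrefix x (i + 1)) := by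
    rw [h (i + 1)]
    exact mem_wordPrefix.2 ⟨i, hlen, rfl⟩
  obtain ⟨a, ha, hya⟩ := List.mem_flatMap.1 hmem
  obtain ⟨j, hj, rfl⟩ := mem_wordPrefix.1 ha
  exact ⟨j, Nat.le_of_lt_succ hj, hya⟩

lemma apply_eq_head (hσ : ∀ a, σ a ≠ []) (h : IsImage (subst σ) x y) {m : ℕ}
    (hflat : ∀ i < m, (σ (x i)).length = 1) : y m = (σ (x m)).head (hσ _) := by
  have hlen : (subst σ (wordPrefix x m)).length = m := by
    rw [length_subst_of_forall_length_eq_one, length_wordPrefix]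
    intro a ha
    obtain ⟨i, hi, rfl⟩ := mem_wordPrefix.1 ha
    exact hflat i hi
  have himage := congrArg (·[m]?) (h (m + 1))
  rw [wordPrefix_succ, subst_append] at himage
  rw [List.getElem?_append_right hlen.le, hlen, Nat.sub_self, subst_singleton,
    ← List.head?_eq_getElem?, List.head?_eq_some_head (hσ _), getElem?_wordPrefix] at himage
  · exact (Option.some.inj himage).symm
  · have := List.length_pos_iff.2 (hσ (x m))
    simp only [List.length_append, hlen]
    omega

end IsImage

end InfiniteWords

theorem Function.periodic_of_eq_apply_succ {X : Type*} [Fintype X] {f : X → X} {b : ℕ → X}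
    (hb : ∀ k, b k = f (b (k + 1))) : Periodic b (Fintype.card X).factorial := by
  have hiter : ∀ n k, b k = f^[n] (b (n + k)) := by
    intro n
    induction n with
    | zero => simp
    | succ n ih =>
      intro k
      rw [ih, hb, iterate_succ_apply, Nat.add_right_comm]
  have hperiodic : ∀ k, b k ∈ periodicPts f := by
    intro k
    obtain ⟨i, j, hne, heq⟩ := Finite.exists_ne_map_eq_of_infinite fun n => b (n + k)
    wlog hij : i < j generalizing i j
    · exact this j i hne.symm heq.symm (by omega)
    have hcycle : IsPeriodicPt f (j - i) (b (i + k)) := by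
      have := hiter (j - i) (i + k)
      rw [← Nat.add_assoc, Nat.sub_add_cancel hij.le, ← heq] at this
      exact this.symm
    rw [hiter i k]
    exact mk_mem_periodicPts (by omega) (hcycle.apply_iterate i)
  intro k
  rw [hiter (Fintype.card X).factorial k, Nat.add_comm]
  exact (isPeriodicPt_factorial_card_of_mem_periodicPts (hperiodic _)).symm

lemma isImage_iterate_of_forall_isImage {σ : α → List α} {u : ℕ → ℕ → α}
    (hu : ∀ k, IsImage (subst σ) (u (k + 1)) (u k)) (j k : ℕ) :
    IsImage (subst σ)^[j] (u (j + k)) (u k) := by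
  induction j generalizing k with
  | zero => simpa using IsImage.id_self (u k)
  | succ j ih =>
    rw [iterate_succ, Nat.add_right_comm]
    exact (hu (j + k)).comp (ih k)

lemma forall_not_isGrowing_or_exists_isGrowing (σ : α → List α) (u : ℕ → ℕ → α) :
    (∀ n, ∃ K, ∀ k ≥ K, ∀ i < n, ¬IsGrowing σ (u k i)) ∨
      ∃ m K, (∀ k ≥ K, ∀ i < m, ¬IsGrowing σ (u k i)) ∧ IsGrowing σ (u K m) := by
  refine or_iff_not_imp_right.2 fun h n => ?_
  push Not at h
  induction n with
  | zero => exact ⟨0, by simp⟩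
  | succ n ih =>
    obtain ⟨K, hK⟩ := ih
    refine ⟨K, fun k hk i hi => ?_⟩
    rcases Nat.lt_succ_iff_lt_or_eq.1 hi with hi | rfl
    · exact hK k hk i hi
    · exact h i k fun k' hk' => hK k' (hk.trans hk')

section Chain

variable {σ : α → List α} {u : ℕ → ℕ → α}

lemma length_eq_one_of_forall_not_isGrowing [Finite α] (hσ : ∀ a, σ a ≠ [])
    (hu : ∀ k, IsImage (subst σ) (u (k + 1)) (u k)) {K n : ℕ}
    (htame : ∀ k ≥ K, ∀ i < n, ¬IsGrowing σ (u k i)) :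
    ∀ k ≥ K, ∀ i < n, (σ (u k i)).length = 1 := by
  intro k hk i hi
  by_contra hne
  have h2 : 2 ≤ (σ (u k i)).length := by
    have := List.length_pos_iff.2 (hσ (u k i))
    omega
  have hsource : ∀ j, ∃ i' ≤ i, u k i ∈ (subst σ)^[j] [u (j + k) i'] := fun j => by
    have h := isImage_iterate_of_forall_isImage hu j k
    rw [iterate_subst] at h
    exact h.exists_le_mem (iterate_subst_singleton_ne_nil hσ j) i
  choose g hg hmem using hsource
  obtain ⟨a, ha⟩ := Finite.exists_infinite_fiber fun j => u (j + k) (g j)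
  rw [Set.infinite_coe_iff] at ha
  have hgrow : IsGrowing σ a :=
    isGrowing_of_infinite_setOf_mem hσ (ha.mono fun j (hj : _ = a) => hj ▸ hmem j) h2
  obtain ⟨j, hj⟩ := ha.nonempty
  have hj : u (j + k) (g j) = a := hj
  exact htame (j + k) (by omega) (g j) (by have := hg j; omega) (hj ▸ hgrow)

lemma periodic_of_forall_length_eq_one [Fintype α] (hσ : ∀ a, σ a ≠ [])
    (hu : ∀ k, IsImage (subst σ) (u (k + 1)) (u k)) {K m : ℕ}
    (hflat : ∀ k ≥ K, ∀ i < m, (σ (u k i)).length = 1) :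
    ∀ i ≤ m, Periodic (fun j => u (j + K) i) (Fintype.card α).factorial := by
  intro i hi
  refine periodic_of_eq_apply_succ (f := fun a => (σ a).head (hσ a)) fun j => ?_
  rw [Nat.add_right_comm]
  exact (hu (j + K)).apply_eq_head hσ fun i' hi' => hflat _ (by omega) i' (by omega)

lemma eq_add_factorial_of_isGrowing [Fintype α] (hσ : ∀ a, σ a ≠ [])
    (hu : ∀ k, IsImage (subst σ) (u (k + 1)) (u k)) {K m : ℕ}
    (hflat : ∀ k ≥ K, ∀ i < m, (σ (u k i)).length = 1) (hgrow : IsGrowing σ (u K m)) :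
    u K = u (K + (Fintype.card α).factorial) := by
  set p := (Fintype.card α).factorial
  have hper := periodic_of_forall_length_eq_one hσ hu hflat
  funext i
  obtain ⟨N, hN⟩ := hgrow (i + 1)
  set j := N * p
  have hletter : u (j + K) m = u K m := by simpa using (hper m le_rfl).nat_mul_eq N
  have hagree : ∀ i' < m + 1, u (j + K) i' = u (j + (K + p)) i' := fun i' hi' => by
    rw [← Nat.add_assoc, Nat.add_right_comm]
    exact (hper i' (by omega) j).symm
  have hlen : i < ((subst σ)^[j] (wordPrefix (u (j + K)) (m + 1))).length :=
    calc i < ((subst σ)^[N] [u K m]).length := hN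
      _ ≤ ((subst σ)^[j] [u K m]).length :=
        monotone_length_iterate_subst hσ _ (Nat.le_mul_of_pos_right N (Nat.factorial_pos _))
      _ ≤ _ := by
        rw [iterate_subst, subst_singleton]
        exact length_le_length_subst_of_mem (σ := fun a => (subst σ)^[j] [a])
          (mem_wordPrefix.2 ⟨m, Nat.lt_add_one m, hletter⟩)
  exact (isImage_iterate_of_forall_isImage hu j K).forall_lt_eq
    (isImage_iterate_of_forall_isImage hu j (K + p)) hagree i hlen

theorem isImage_iterate_factorial_of_forall_isImage [Fintype α] (hσ : ∀ a, σ a ≠ [])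
    (hu : ∀ k, IsImage (subst σ) (u (k + 1)) (u k)) :
    IsImage (subst σ)^[(Fintype.card α).factorial] (u 0) (u 0) := by
  set p := (Fintype.card α).factorial
  have hshift : ∀ n, ∃ K, ∀ i < n, u K i = u (K + p) i := by
    rcases forall_not_isGrowing_or_exists_isGrowing σ u with htame | ⟨m, K, htame, hgrow⟩
    · intro n
      obtain ⟨K, hK⟩ := htame n
      refine ⟨K, fun i hi => ?_⟩
      have := periodic_of_forall_length_eq_one hσ hu
        (length_eq_one_of_forall_not_isGrowing hσ hu hK) i hi.le 0
      simpa [Nat.add_comm] using this.symm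
    · have := eq_add_factorial_of_isGrowing hσ hu
        (length_eq_one_of_forall_not_isGrowing hσ hu htame) hgrow
      exact fun n => ⟨K, fun i _ => congrFun this i⟩
  have h0p : u p = u 0 := by
    funext i
    obtain ⟨K, hK⟩ := hshift (i + 1)
    have hlen := length_le_length_iterate_subst hσ K (wordPrefix (u K) (i + 1))
    rw [length_wordPrefix] at hlen
    exact ((isImage_iterate_of_forall_isImage hu K 0).forall_lt_eq
      (isImage_iterate_of_forall_isImage hu K p) hK i hlen).symm
  simpa [h0p] using isImage_iterate_of_forall_isImage hu p 0

end Chain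

theorem fixed_point_of_constant_sequence_is_periodic_point_general {d : ℕ}
    (σ : Fin (d + 1) → List (Fin (d + 1))) (hσ : ∀ a, σ a ≠ [])
    (u : ℕ → ℕ → Fin (d + 1))
    (hu : ∀ k n : ℕ, IsPrefixOf (((List.range n).map (u (k + 1))).flatMap σ) (u k)) :
    ∃ p : ℕ, 1 ≤ p ∧ ∀ n : ℕ,
      IsPrefixOf ((fun w : List (Fin (d + 1)) => w.flatMap σ)^[p]
        ((List.range n).map (u 0))) (u 0) :=
  ⟨(Fintype.card (Fin (d + 1))).factorial, Nat.factorial_pos _,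
    isImage_iterate_factorial_of_forall_isImage hσ fun k n => hu k n⟩

/-- If `u = (u_k)` is a sequence of infinite words with `σ(u_{k+1}) = u_k` for every
`k` (a fixed point of the constant directive sequence `σ^ω`), then `u_0` is a periodic
point of `σ`: `σ^p(u_0) = u_0` for some `p ≥ 1`. -/
theorem fixed_point_of_constant_sequence_is_periodic_point {d : ℕ} (hd : 1 ≤ d)
    (σ : Fin (d + 1) → List (Fin (d + 1))) (hσ : ∀ a, σ a ≠ [])
    (u : ℕ → ℕ → Fin (d + 1))
    (hu : ∀ k n : ℕ, IsPrefixOf (((List.range n).map (u (k + 1))).flatMap σ) (u k)) :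
    ∃ p : ℕ, 1 ≤ p ∧ ∀ n : ℕ,
      IsPrefixOf ((fun w : List (Fin (d + 1)) => w.flatMap σ)^[p]
        ((List.range n).map (u 0))) (u 0) :=
  fixed_point_of_constant_sequence_is_periodic_point_general σ hσ u hu
end
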